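/- arXiv:2604.04889 — 5 statements merged into one kernel-verified Lean document; each statement's English description precedes it below -/
import Mathlib

section
/- Shapley–Folkman (classical form): let A_1, …, A_n ⊆ ℝ^d be non-empty compact sets. For every x ∈ conv(A_1) + ⋯ + conv(A_n) there exists a subset I ⊆ {1, …, n} with |I| ≤ d such that x ∈ Σ_{i∉I} A_i + Σ_{i∈I} conv(A_i). -/
/-!
Cayley trick: lift each `A i` to `A i × {eᵢ}` in `E × (ι → 𝕜)`. If `x = ∑ gᵢ` with
`gᵢ ∈ conv (A i)`, then `(x, 𝟙) / |ι|` lies in the convex hull of the union of the lifted sets,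
so by Carathéodory it is a positive convex combination of affinely independent lifted points.
These lie in the hyperplane `∑ᵢ tᵢ = 1`, so there are at most `dim E + |ι|` of them. Reading off
the `i`-th coordinate shows that every index `i` is used, so at most `dim E` indices are used
more than once; an index used exactly once contributes a point of `A i` itself.
-/

open Pointwise Finset Module

lemma AffineIndependent.card_le_finrank_of_map_eq_one {k V ι : Type*} [Field k] [AddCommGroup V]
    [Module k V] [FiniteDimensional k V] [Fintype ι] {p : ι → V} (hp : AffineIndependent k p)
    (φ : V →ₗ[k] k) (hφ : ∀ i, φ (p i) = 1) : Fintype.card ι ≤ finrank k V := by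
  cases isEmpty_or_nonempty ι
  · simp
  inhabit ι
  have hspan : vectorSpan k (Set.range p) ≤ LinearMap.ker φ := by
    rw [vectorSpan_def, Submodule.span_le]
    rintro _ ⟨_, ⟨i, rfl⟩, _, ⟨j, rfl⟩, rfl⟩
    simp [hφ]
  have hker : LinearMap.ker φ ≠ ⊤ := fun h => by
    simpa [hφ] using h.ge (Submodule.mem_top (x := p default))
  calc Fintype.card ι ≤ finrank k (vectorSpan k (Set.range p)) + 1 := hp.card_le_finrank_succ
    _ ≤ finrank k (LinearMap.ker φ) + 1 := by gcongr; exact Submodule.finrank_mono hspan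
    _ ≤ finrank k V := Submodule.finrank_lt hker

lemma Fintype.card_add_card_filter_card_fiber_ne_one_le {ι κ : Type*} [Fintype ι] [Fintype κ]
    [DecidableEq ι] {f : κ → ι} (hf : Function.Surjective f) :
    Fintype.card ι + #{i | #{k | f k = i} ≠ 1} ≤ Fintype.card κ := by
  have hfiber (i : ι) : 1 + (if #{k | f k = i} ≠ 1 then 1 else 0) ≤ #{k | f k = i} := by
    obtain ⟨k, rfl⟩ := hf i
    have : 0 < #{k' | f k' = f k} := Finset.card_pos.2 ⟨k, by simp⟩
    split_ifs <;> omega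
  calc Fintype.card ι + #{i | #{k | f k = i} ≠ 1}
      = ∑ i, (1 + if #{k | f k = i} ≠ 1 then 1 else 0) := by
        rw [card_filter, sum_add_distrib]; simp
    _ ≤ ∑ i, #{k | f k = i} := sum_le_sum fun i _ => hfiber i
    _ = Fintype.card κ := (card_eq_sum_card_fiberwise (by simp)).symm

lemma sum_fiber_smul_mem_of_card_eq_one {R M ι κ : Type*} [Semiring R] [AddCommMonoid M]
    [Module R M] [Fintype κ] [DecidableEq ι] {A : ι → Set M} {f : κ → ι} {a : κ → M}
    {v : κ → R} (ha : ∀ k, a k ∈ A (f k)) {i : ι} (hv₁ : ∑ k with f k = i, v k = 1)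
    (hi : #{k | f k = i} = 1) : ∑ k with f k = i, v k • a k ∈ A i := by
  obtain ⟨k, hk⟩ := card_eq_one.1 hi
  have hfk : f k = i := by simpa using (Finset.ext_iff.1 hk k).2 (mem_singleton_self k)
  rw [hk, sum_singleton] at hv₁ ⊢
  rw [hv₁, one_smul, ← hfk]
  exact ha k

section FiberSums

variable {𝕜 E ι κ : Type*} [Field 𝕜] [LinearOrder 𝕜] [IsStrictOrderedRing 𝕜] [AddCommGroup E]
  [Module 𝕜 E] [Fintype κ] [DecidableEq ι] {A : ι → Set E} {f : κ → ι} {a : κ → E} {v : κ → 𝕜}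

lemma sum_fiber_smul_mem_convexHull (ha : ∀ k, a k ∈ A (f k)) (hv₀ : ∀ k, 0 ≤ v k) {i : ι}
    (hv₁ : ∑ k with f k = i, v k = 1) : ∑ k with f k = i, v k • a k ∈ convexHull 𝕜 (A i) :=
  (convex_convexHull 𝕜 _).sum_mem (fun k _ => hv₀ k) hv₁ fun k hk =>
    subset_convexHull 𝕜 _ <| (mem_filter.1 hk).2 ▸ ha k

lemma sum_smul_mem_sum_add_sum_convexHull [Fintype ι] (ha : ∀ k, a k ∈ A (f k))
    (hv₀ : ∀ k, 0 ≤ v k) (hv₁ : ∀ i, ∑ k with f k = i, v k = 1) {I : Finset ι}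
    (hI : ∀ i ∉ I, #{k | f k = i} = 1) :
    ∑ k, v k • a k ∈ ∑ i ∈ Iᶜ, A i + ∑ i ∈ I, convexHull 𝕜 (A i) := by
  rw [← sum_fiberwise univ f, ← sum_compl_add_sum I]
  exact Set.add_mem_add
    (Set.finsetSum_mem_finsetSum _ _ _ fun i hi =>
      sum_fiber_smul_mem_of_card_eq_one ha (hv₁ i) (hI i (mem_compl.1 hi)))
    (Set.finsetSum_mem_finsetSum _ _ _ fun i _ => sum_fiber_smul_mem_convexHull ha hv₀ (hv₁ i))

end FiberSums

lemma sum_smul_prod_single_eq_iff {R E ι κ : Type*} [Semiring R] [AddCommMonoid E] [Module R E]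
    [Fintype κ] [DecidableEq ι] {w : κ → R} {a : κ → E} {f : κ → ι} {y : E} {c : ι → R} :
    ∑ k, w k • (a k, (Pi.single (f k) 1 : ι → R)) = (y, c) ↔
      ∑ k, w k • a k = y ∧ ∀ i, ∑ k with f k = i, w k = c i := by
  simp [Prod.ext_iff, funext_iff, Prod.fst_sum, Prod.snd_sum, Finset.sum_apply, Pi.single_apply,
    sum_filter, eq_comm (a := f _)]

section CayleyEmbedding

variable {𝕜 E ι : Type*} [DecidableEq ι]

def cayleyEmbedding (𝕜 : Type*) [Zero 𝕜] [One 𝕜] (A : ι → Set E) : Set (E × (ι → 𝕜)) :=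
  ⋃ i, A i ×ˢ {Pi.single i 1}

lemma mem_cayleyEmbedding [Zero 𝕜] [One 𝕜] {A : ι → Set E} {z : E × (ι → 𝕜)} :
    z ∈ cayleyEmbedding 𝕜 A ↔ ∃ i, ∃ a ∈ A i, z = (a, Pi.single i 1) := by
  simp [cayleyEmbedding, Prod.ext_iff, eq_comm]

lemma prod_single_subset_cayleyEmbedding (𝕜 : Type*) [Zero 𝕜] [One 𝕜] (A : ι → Set E) (i : ι) :
    A i ×ˢ {Pi.single i 1} ⊆ cayleyEmbedding 𝕜 A :=
  Set.subset_iUnion (fun j => A j ×ˢ {Pi.single j 1}) i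

variable [AddCommGroup E]

lemma AffineIndependent.card_le_of_range_subset_cayleyEmbedding [Field 𝕜] [Module 𝕜 E]
    [FiniteDimensional 𝕜 E] [Fintype ι] {κ : Type*} [Fintype κ] {A : ι → Set E}
    {z : κ → E × (ι → 𝕜)} (hz : AffineIndependent 𝕜 z) (hzA : Set.range z ⊆ cayleyEmbedding 𝕜 A) :
    Fintype.card κ ≤ finrank 𝕜 E + Fintype.card ι := by
  let φ : E × (ι → 𝕜) →ₗ[𝕜] 𝕜 := ∑ i, LinearMap.proj i ∘ₗ LinearMap.snd 𝕜 E (ι → 𝕜)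
  have hφ (k : κ) : φ (z k) = 1 := by
    obtain ⟨i, a, -, hz⟩ := mem_cayleyEmbedding.1 (hzA (Set.mem_range_self k))
    simp [φ, hz]
  simpa [Module.finrank_prod] using hz.card_le_finrank_of_map_eq_one φ hφ

variable [Field 𝕜] [LinearOrder 𝕜] [IsStrictOrderedRing 𝕜] [Module 𝕜 E]

lemma inv_card_smul_mem_convexHull_cayleyEmbedding [Fintype ι] [Nonempty ι] {A : ι → Set E}
    {x : E} (hx : x ∈ ∑ i, convexHull 𝕜 (A i)) :
    (Fintype.card ι : 𝕜)⁻¹ • (x, 1) ∈ convexHull 𝕜 (cayleyEmbedding 𝕜 A) := by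
  obtain ⟨g, hg, rfl⟩ := (Set.mem_fintype_sum _ _).1 hx
  have hpt (i : ι) : (g i, Pi.single i (1 : 𝕜)) ∈ convexHull 𝕜 (cayleyEmbedding 𝕜 A) := by
    refine convexHull_mono (prod_single_subset_cayleyEmbedding 𝕜 A i) ?_
    rw [convexHull_prod, convexHull_singleton]
    exact ⟨hg i, rfl⟩
  have hsum : ((∑ i, g i, 1) : E × (ι → 𝕜)) = ∑ i, (g i, Pi.single i 1) := by
    ext <;> simp [Prod.fst_sum, Prod.snd_sum, Finset.sum_apply]
  rw [hsum, smul_sum]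
  exact (convex_convexHull 𝕜 _).sum_mem (fun _ _ => by positivity) (by simp) fun i _ => hpt i

end CayleyEmbedding

theorem exists_card_le_finrank_mem_sum_add_sum_convexHull {𝕜 E ι : Type*} [Field 𝕜]
    [LinearOrder 𝕜] [IsStrictOrderedRing 𝕜] [AddCommGroup E] [Module 𝕜 E] [FiniteDimensional 𝕜 E]
    [Fintype ι] [DecidableEq ι] {A : ι → Set E} {x : E} (hx : x ∈ ∑ i, convexHull 𝕜 (A i)) :
    ∃ I : Finset ι, #I ≤ finrank 𝕜 E ∧ x ∈ ∑ i ∈ Iᶜ, A i + ∑ i ∈ I, convexHull 𝕜 (A i) := by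
  cases isEmpty_or_nonempty ι
  · exact ⟨∅, by simp, by simpa [univ_eq_empty] using hx⟩
  have hlift := inv_card_smul_mem_convexHull_cayleyEmbedding (𝕜 := 𝕜) hx
  obtain ⟨κ, _, z, w, hzA, hz, hw₀, -, hwz⟩ := eq_pos_convex_span_of_mem_convexHull hlift
  choose f a ha hfa using fun k => mem_cayleyEmbedding.1 (hzA (Set.mem_range_self k))
  set n : 𝕜 := (Fintype.card ι : 𝕜)
  have hn : n ≠ 0 := Nat.cast_ne_zero.2 Fintype.card_ne_zero
  simp only [hfa, Prod.smul_mk] at hwz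
  obtain ⟨hfst, hsnd⟩ := sum_smul_prod_single_eq_iff.1 hwz
  have hsum : ∑ k, (n * w k) • a k = x := by
    simp only [mul_smul, ← smul_sum, hfst, smul_inv_smul₀ hn]
  have hfiber (i : ι) : ∑ k with f k = i, n * w k = 1 := by
    rw [← mul_sum, hsnd i, Pi.smul_apply, Pi.one_apply, smul_eq_mul, mul_one, mul_inv_cancel₀ hn]
  have hf : Function.Surjective f := fun i => by
    by_contra! h
    simpa [filter_false_of_mem fun k _ => h k] using hfiber i
  refine ⟨({i | #{k | f k = i} ≠ 1} : Finset ι), ?_, hsum ▸ sum_smul_mem_sum_add_sum_convexHull ha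
    (fun k => mul_nonneg (Nat.cast_nonneg _) (hw₀ k).le) hfiber fun i hi => by simpa using hi⟩
  have := hz.card_le_of_range_subset_cayleyEmbedding hzA
  have := Fintype.card_add_card_filter_card_fiber_ne_one_le hf
  omega

theorem shapley_folkman_classical_general {d n : ℕ} (A : Fin n → Set (EuclideanSpace ℝ (Fin d)))
    (x : EuclideanSpace ℝ (Fin d)) (hx : x ∈ ∑ i, convexHull ℝ (A i)) :
    ∃ I : Finset (Fin n), I.card ≤ d ∧
      x ∈ (∑ i ∈ Iᶜ, A i) + ∑ i ∈ I, convexHull ℝ (A i) := by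
  simpa using exists_card_le_finrank_mem_sum_add_sum_convexHull hx

theorem shapley_folkman_classical {d n : ℕ} (A : Fin n → Set (EuclideanSpace ℝ (Fin d)))
    (hne : ∀ i, (A i).Nonempty) (hc : ∀ i, IsCompact (A i))
    (x : EuclideanSpace ℝ (Fin d)) (hx : x ∈ ∑ i, convexHull ℝ (A i)) :
    ∃ I : Finset (Fin n), I.card ≤ d ∧
      x ∈ (∑ i ∈ Iᶜ, A i) + ∑ i ∈ I, convexHull ℝ (A i) :=
  shapley_folkman_classical_general A x hx
end

section
/- Probabilistic rounding of a convexified sum: let A_1, …, A_m ⊆ ℝ^d be non-empty compact sets with A_i ⊆ B(c_i, R) for points c_i ∈ ℝ^d and R ≥ 0. Then for every choice of points y_i ∈ conv(A_i) there exist points a_i ∈ A_i with |Σ_{i=1}^m y_i − Σ_{i=1}^m a_i| ≤ R√m. -/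
open Metric

lemma probabilistic_rounding_step {d : ℕ} {A : Set (EuclideanSpace ℝ (Fin d))}
    {c y : EuclideanSpace ℝ (Fin d)} {R : ℝ}
    (hball : A ⊆ closedBall c R) (hy : y ∈ convexHull ℝ A)
    (v : EuclideanSpace ℝ (Fin d)) :
    ∃ x ∈ A, ‖v + (y - x)‖ ^ 2 ≤ ‖v‖ ^ 2 + R ^ 2 := by
  rw [convexHull_eq] at hy
  obtain ⟨ι, t, w, z, hw0, hw1, hz, hcm⟩ := hy
  have hyz : ∑ i ∈ t, w i • z i = y := by
    rw [← hcm, Finset.centerMass_eq_of_sum_1 _ _ hw1]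
  have hzero : ∑ i ∈ t, w i • (y - z i) = 0 := by
    rw [Finset.sum_congr rfl (fun i _ => smul_sub (w i) y (z i)),
      Finset.sum_sub_distrib, ← Finset.sum_smul, hw1, one_smul, hyz, sub_self]
  have hyc : ∑ i ∈ t, w i • (z i - c) = y - c := by
    rw [Finset.sum_congr rfl (fun i _ => smul_sub (w i) (z i) c),
      Finset.sum_sub_distrib, hyz, ← Finset.sum_smul, hw1, one_smul]
  -- second moment bound
  have hsum2 : ∑ i ∈ t, w i * ‖y - z i‖ ^ 2 ≤ R ^ 2 := by
    have expand : ∀ i ∈ t, w i * ‖y - z i‖ ^ 2 =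
        w i * ‖y - c‖ ^ 2 - 2 * (w i * inner ℝ (y - c) (z i - c))
          + w i * ‖z i - c‖ ^ 2 := by
      intro i hi
      have : y - z i = (y - c) - (z i - c) := by abel
      rw [this, @norm_sub_sq_real (EuclideanSpace ℝ (Fin d))]
      ring
    rw [Finset.sum_congr rfl expand]
    have h1 : ∑ i ∈ t, (w i * ‖y - c‖ ^ 2 - 2 * (w i * inner ℝ (y - c) (z i - c))
          + w i * ‖z i - c‖ ^ 2)
        = ‖y - c‖ ^ 2 - 2 * ‖y - c‖ ^ 2 + ∑ i ∈ t, w i * ‖z i - c‖ ^ 2 := by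
      rw [Finset.sum_add_distrib, Finset.sum_sub_distrib, ← Finset.sum_mul,
        ← Finset.mul_sum]
      have : ∑ i ∈ t, w i * inner ℝ (y - c) (z i - c)
          = (inner ℝ (y - c) (y - c) : ℝ) := by
        rw [← hyc, inner_sum]
        exact Finset.sum_congr rfl fun i _ => (real_inner_smul_right _ _ _).symm
      rw [this, hw1, real_inner_self_eq_norm_sq]
      ring
    rw [h1]
    have h2 : ∑ i ∈ t, w i * ‖z i - c‖ ^ 2 ≤ ∑ i ∈ t, w i * R ^ 2 := by
      refine Finset.sum_le_sum fun i hi => ?_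
      have hzi : ‖z i - c‖ ≤ R := by
        have := hball (hz i hi)
        rwa [mem_closedBall, dist_eq_norm] at this
      have : ‖z i - c‖ ^ 2 ≤ R ^ 2 :=
        pow_le_pow_left₀ (norm_nonneg _) hzi 2
      exact mul_le_mul_of_nonneg_left this (hw0 i hi)
    rw [← Finset.sum_mul, hw1, one_mul] at h2
    nlinarith [sq_nonneg ‖y - c‖]
  -- weighted average of the target quantity
  have havg : ∑ i ∈ t, w i * ‖v + (y - z i)‖ ^ 2 ≤ ‖v‖ ^ 2 + R ^ 2 := by
    have expand : ∀ i ∈ t, w i * ‖v + (y - z i)‖ ^ 2 =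
        w i * ‖v‖ ^ 2 + 2 * (w i * inner ℝ v (y - z i)) + w i * ‖y - z i‖ ^ 2 := by
      intro i hi
      rw [@norm_add_sq_real (EuclideanSpace ℝ (Fin d))]
      ring
    rw [Finset.sum_congr rfl expand, Finset.sum_add_distrib, Finset.sum_add_distrib,
      ← Finset.sum_mul, ← Finset.mul_sum, hw1, one_mul]
    have : ∑ i ∈ t, w i * inner ℝ v (y - z i) = (inner ℝ v (0 : EuclideanSpace ℝ (Fin d)) : ℝ) := by
      rw [← hzero, inner_sum]
      exact Finset.sum_congr rfl fun i _ => (real_inner_smul_right _ _ _).symm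
    rw [this, inner_zero_right]
    simpa using hsum2
  -- restrict to positive weights
  set t' := t.filter (fun i => w i ≠ 0) with ht'
  have hsub : t' ⊆ t := Finset.filter_subset _ _
  have hw1' : ∑ i ∈ t', w i = 1 := by
    rw [ht', Finset.sum_filter_ne_zero]; exact hw1
  have hne' : t'.Nonempty := by
    rcases Finset.eq_empty_or_nonempty t' with h | h
    · rw [h, Finset.sum_empty] at hw1'; norm_num at hw1'
    · exact h
  have havg' : ∑ i ∈ t', w i * ‖v + (y - z i)‖ ^ 2 ≤ ∑ i ∈ t', w i * (‖v‖ ^ 2 + R ^ 2) := by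
    rw [← Finset.sum_mul, hw1', one_mul]
    refine le_trans ?_ havg
    refine Finset.sum_le_sum_of_subset_of_nonneg hsub fun i hi hni => ?_
    exact mul_nonneg (hw0 i hi) (sq_nonneg _)
  obtain ⟨i, hi, hile⟩ := Finset.exists_le_of_sum_le hne' havg'
  have hwi : 0 < w i := by
    have := (Finset.mem_filter.mp hi).2
    exact lt_of_le_of_ne (hw0 i (hsub hi)) (Ne.symm this)
  refine ⟨z i, hz i (hsub hi), ?_⟩
  exact le_of_mul_le_mul_left hile hwi

theorem probabilistic_rounding {d m : ℕ} (A : Fin m → Set (EuclideanSpace ℝ (Fin d)))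
    (hne : ∀ i, (A i).Nonempty) (hc : ∀ i, IsCompact (A i))
    (c : Fin m → EuclideanSpace ℝ (Fin d)) (R : ℝ) (hR : 0 ≤ R)
    (hball : ∀ i, A i ⊆ closedBall (c i) R)
    (y : Fin m → EuclideanSpace ℝ (Fin d)) (hy : ∀ i, y i ∈ convexHull ℝ (A i)) :
    ∃ a : Fin m → EuclideanSpace ℝ (Fin d), (∀ i, a i ∈ A i) ∧
      ‖(∑ i, y i) - ∑ i, a i‖ ≤ R * Real.sqrt m := by
  have key : ∀ s : Finset (Fin m), ∃ a : Fin m → EuclideanSpace ℝ (Fin d),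
      (∀ i, a i ∈ A i) ∧ ‖∑ i ∈ s, (y i - a i)‖ ^ 2 ≤ s.card * R ^ 2 := by
    intro s
    induction s using Finset.cons_induction with
    | empty => exact ⟨fun i => (hne i).some, fun i => (hne i).some_mem, by simp⟩
    | cons j s hj ih =>
      obtain ⟨a, ha, hsum⟩ := ih
      obtain ⟨x, hx, hxle⟩ :=
        probabilistic_rounding_step (hball j) (hy j) (∑ i ∈ s, (y i - a i))
      refine ⟨Function.update a j x, ?_, ?_⟩
      · intro i
        rcases eq_or_ne i j with rfl | h
        · simpa using hx
        · simpa [Function.update_of_ne h] using ha i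
      · rw [Finset.sum_cons]
        have hrest : ∑ i ∈ s, (y i - Function.update a j x i) = ∑ i ∈ s, (y i - a i) := by
          refine Finset.sum_congr rfl fun i hi => ?_
          rw [Function.update_of_ne (by rintro rfl; exact hj hi)]
        rw [hrest, Function.update_self, Finset.card_cons]
        calc ‖(y j - x) + ∑ i ∈ s, (y i - a i)‖ ^ 2
            = ‖(∑ i ∈ s, (y i - a i)) + (y j - x)‖ ^ 2 := by rw [add_comm]
          _ ≤ ‖∑ i ∈ s, (y i - a i)‖ ^ 2 + R ^ 2 := hxle
          _ ≤ s.card * R ^ 2 + R ^ 2 := by linarith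
          _ = (s.card + 1) * R ^ 2 := by ring
          _ = ((s.card + 1 : ℕ) : ℝ) * R ^ 2 := by push_cast; ring
  obtain ⟨a, ha, hsum⟩ := key Finset.univ
  refine ⟨a, ha, ?_⟩
  have hdiff : (∑ i, y i) - ∑ i, a i = ∑ i, (y i - a i) := by
    rw [Finset.sum_sub_distrib]
  rw [hdiff]
  have h1 : ‖∑ i, (y i - a i)‖ = Real.sqrt (‖∑ i, (y i - a i)‖ ^ 2) := by
    rw [Real.sqrt_sq (norm_nonneg _)]
  rw [h1]
  calc Real.sqrt (‖∑ i, (y i - a i)‖ ^ 2)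
      ≤ Real.sqrt ((Finset.univ : Finset (Fin m)).card * R ^ 2) := Real.sqrt_le_sqrt hsum
    _ = R * Real.sqrt m := by
        rw [Finset.card_univ, Fintype.card_fin, mul_comm, Real.sqrt_mul (by positivity),
          Real.sqrt_sq hR]
end

section
/- Shapley–Folkman, radius form: let A_1, …, A_n ⊆ ℝ^d be non-empty compact sets and R := max_i rad(A_i), where rad(A) := inf_{x∈ℝ^d} sup_{a∈A} |a − x|. Then for every x ∈ conv(A_1) + ⋯ + conv(A_n) there exist points a_i ∈ A_i with |x − (a_1 + ⋯ + a_n)| ≤ R·√(min{n, d}). -/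
open Pointwise Metric

noncomputable def chebRad {d : ℕ} (A : Set (EuclideanSpace ℝ (Fin d))) : ℝ :=
  ⨅ x : EuclideanSpace ℝ (Fin d), sSup ((fun a => ‖a - x‖) '' A)

open Finset
open scoped Classical RealInnerProductSpace

/-- Conic Carathéodory reduction: any nonneg combination can be rewritten with
linearly independent support. -/
theorem reduce_lin {ι V : Type*} [AddCommGroup V] [Module ℝ V] (φ : ι → V) :
    ∀ (N : ℕ) (T : Finset ι), T.card ≤ N → ∀ w : ι → ℝ, (∀ p ∈ T, 0 ≤ w p) →
    ∃ T' : Finset ι, T' ⊆ T ∧ ∃ w' : ι → ℝ, (∀ p ∈ T', 0 < w' p) ∧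
      (∑ p ∈ T', w' p • φ p = ∑ p ∈ T, w p • φ p) ∧
      LinearIndependent ℝ (fun p : T' => φ p) := by
  classical
  intro N
  induction N with
  | zero =>
    intro T hT w hw
    rw [Nat.le_zero, card_eq_zero] at hT
    subst hT
    refine ⟨∅, Finset.Subset.refl _, w, by simp, rfl, linearIndependent_empty_type⟩
  | succ N ih =>
    intro T hT w hw
    -- restrict to positive weights
    set T₁ := T.filter (fun p => 0 < w p) with hT₁def
    have hsub : T₁ ⊆ T := filter_subset _ _
    have hsum1 : ∑ p ∈ T₁, w p • φ p = ∑ p ∈ T, w p • φ p := by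
      refine Finset.sum_subset hsub ?_
      intro p hp hnp
      have : w p = 0 := by
        have := hw p hp
        rw [hT₁def, mem_filter] at hnp
        push_neg at hnp
        linarith [hnp hp]
      simp [this]
    by_cases hli : LinearIndependent ℝ (fun p : T₁ => φ p)
    · exact ⟨T₁, hsub, w, fun p hp => (mem_filter.mp hp).2, hsum1, hli⟩
    · obtain ⟨g, hg0, i₀, hgne⟩ := Fintype.not_linearIndependent_iff.mp hli
      -- extend g to ι
      set c : ι → ℝ := fun p => if h : p ∈ T₁ then g ⟨p, h⟩ else 0 with hcdef
      have hcsum : ∑ p ∈ T₁, c p • φ p = 0 := by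
        rw [← hg0, ← Finset.sum_attach T₁ (fun p => c p • φ p)]
        refine Finset.sum_congr rfl fun p _ => ?_
        simp [hcdef, p.2]
      have hcne : c (i₀ : ι) ≠ 0 := by simp [hcdef, i₀.2, hgne]
      -- WLOG some positive entry
      have key : ∀ c : ι → ℝ, (∑ p ∈ T₁, c p • φ p = 0) → (∃ p ∈ T₁, 0 < c p) →
          ∃ T' : Finset ι, T' ⊆ T ∧ ∃ w' : ι → ℝ, (∀ p ∈ T', 0 < w' p) ∧
          (∑ p ∈ T', w' p • φ p = ∑ p ∈ T, w p • φ p) ∧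
          LinearIndependent ℝ (fun p : T' => φ p) := by
        intro c hc0 ⟨q, hqT, hqc⟩
        set P := T₁.filter (fun p => 0 < c p) with hPdef
        have hPne : P.Nonempty := ⟨q, mem_filter.mpr ⟨hqT, hqc⟩⟩
        obtain ⟨p₀, hp₀P, hp₀min⟩ := Finset.exists_min_image P (fun p => w p / c p) hPne
        have hp₀T₁ : p₀ ∈ T₁ := (mem_filter.mp hp₀P).1
        have hp₀c : 0 < c p₀ := (mem_filter.mp hp₀P).2
        set t := w p₀ / c p₀ with htdef
        have ht0 : 0 ≤ t := div_nonneg (le_of_lt (mem_filter.mp hp₀T₁).2) hp₀c.le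
        set w'' : ι → ℝ := fun p => w p - t * c p with hw''def
        have hw''nonneg : ∀ p ∈ T₁, 0 ≤ w'' p := by
          intro p hp
          rcases le_or_gt (c p) 0 with h | h
          · have : t * c p ≤ 0 := mul_nonpos_of_nonneg_of_nonpos ht0 h
            have := (mem_filter.mp hp).2
            simp only [hw''def]; linarith
          · have hpP : p ∈ P := mem_filter.mpr ⟨hp, h⟩
            have := hp₀min p hpP
            have : t * c p ≤ w p := by
              rw [htdef]
              calc w p₀ / c p₀ * c p ≤ w p / c p * c p := by
                    exact mul_le_mul_of_nonneg_right (hp₀min p hpP) h.le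
                _ = w p := div_mul_cancel₀ _ h.ne'
            simp only [hw''def]; linarith
        have hw''p₀ : w'' p₀ = 0 := by
          simp only [hw''def, htdef]
          field_simp
          ring
        have hA : ∑ p ∈ T₁, w'' p • φ p = ∑ p ∈ T₁, w p • φ p := by
          simp only [hw''def, sub_smul, mul_smul, Finset.sum_sub_distrib]
          rw [← Finset.smul_sum, hc0, smul_zero, sub_zero]
        have hB : ∑ p ∈ T₁.erase p₀, w'' p • φ p = ∑ p ∈ T₁, w'' p • φ p := by
          rw [← Finset.add_sum_erase _ _ hp₀T₁, hw''p₀, zero_smul, zero_add]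
        have hsum2 : ∑ p ∈ T₁.erase p₀, w'' p • φ p = ∑ p ∈ T, w p • φ p :=
          hB.trans (hA.trans hsum1)
        have hcard : (T₁.erase p₀).card ≤ N := by
          have h1 : (T₁.erase p₀).card < T₁.card := card_erase_lt_of_mem hp₀T₁
          have h2 : T₁.card ≤ T.card := card_le_card hsub
          omega
        obtain ⟨T', hT'sub, w', hw'pos, hw'sum, hw'li⟩ :=
          ih (T₁.erase p₀) hcard w'' (fun p hp => hw''nonneg p (erase_subset _ _ hp))
        exact ⟨T', hT'sub.trans ((erase_subset _ _).trans hsub), w', hw'pos,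
          hw'sum.trans hsum2, hw'li⟩
      rcases lt_or_gt_of_ne hcne with h | h
      · refine key (fun p => -c p) ?_ ⟨i₀, i₀.2, neg_pos.mpr h⟩
        simp only [neg_smul, Finset.sum_neg_distrib, hcsum, neg_zero]
      · exact key c hcsum ⟨i₀, i₀.2, h⟩

theorem exists_of_mem_finsetSum {ι E : Type*} [AddCommMonoid E] (S : ι → Set E)
    (s : Finset ι) (x : E) (hx : x ∈ ∑ i ∈ s, S i) :
    ∃ y : ι → E, (∀ i ∈ s, y i ∈ S i) ∧ ∑ i ∈ s, y i = x := by
  classical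
  induction s using Finset.induction_on generalizing x with
  | empty =>
    simp only [Finset.sum_empty] at hx ⊢
    rw [Set.mem_zero] at hx
    exact ⟨fun _ => 0, by simp, hx.symm⟩
  | insert a s ha ih =>
    rw [Finset.sum_insert ha] at hx
    obtain ⟨u, hu, v, hv, huv⟩ := Set.mem_add.mp hx
    obtain ⟨y, hy, hysum⟩ := ih v hv
    refine ⟨Function.update y a u, ?_, ?_⟩
    · intro i hi
      rcases Finset.mem_insert.mp hi with rfl | hi
      · simp [hu]
      · rw [Function.update_of_ne (fun h => ha (by rwa [h] at hi))]
        exact hy i hi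
    · rw [Finset.sum_insert ha, Function.update_self]
      have : ∑ i ∈ s, Function.update y a u i = ∑ i ∈ s, y i :=
        Finset.sum_congr rfl fun i hi =>
          Function.update_of_ne (fun h => ha (by rwa [h] at hi)) _ _
      rw [this, hysum, huv]

theorem reduce_lin' {ι V : Type*} [AddCommGroup V] [Module ℝ V] (φ : ι → V)
    (T : Finset ι) (w : ι → ℝ) (hw : ∀ p ∈ T, 0 ≤ w p) :
    ∃ T' : Finset ι, T' ⊆ T ∧ ∃ w' : ι → ℝ, (∀ p ∈ T', 0 < w' p) ∧
      (∑ p ∈ T', w' p • φ p = ∑ p ∈ T, w p • φ p) ∧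
      LinearIndependent ℝ (fun p : T' => φ p) :=
  reduce_lin φ T.card T le_rfl w hw

/-- Shapley–Folkman decomposition. -/
theorem sf_decomp {d n : ℕ} (A : Fin n → Set (EuclideanSpace ℝ (Fin d)))
    (x : EuclideanSpace ℝ (Fin d)) (hx : x ∈ ∑ i, convexHull ℝ (A i)) :
    ∃ y : Fin n → EuclideanSpace ℝ (Fin d), (∀ i, y i ∈ convexHull ℝ (A i)) ∧
      (∑ i, y i = x) ∧
      (Finset.univ.filter (fun i => y i ∉ A i)).card ≤ d := by
  classical
  obtain ⟨y₀, hy₀, hy₀sum⟩ := exists_of_mem_finsetSum _ _ x hx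
  have hrep : ∀ i, ∃ s : Finset (EuclideanSpace ℝ (Fin d)), ↑s ⊆ A i ∧
      ∃ w : EuclideanSpace ℝ (Fin d) → ℝ,
      (∀ a ∈ s, 0 ≤ w a) ∧ ∑ a ∈ s, w a = 1 ∧ ∑ a ∈ s, w a • a = y₀ i := by
    intro i
    have := hy₀ i (Finset.mem_univ i)
    rw [convexHull_eq_union_convexHull_finite_subsets] at this
    simp only [Set.mem_iUnion] at this
    obtain ⟨s, hs, hmem⟩ := this
    obtain ⟨w, hw0, hw1, hwsum⟩ := Finset.mem_convexHull'.mp hmem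
    exact ⟨s, hs, w, hw0, hw1, hwsum⟩
  choose s hsA wt hwt0 hwt1 hwtsum using hrep
  set φ : Fin n × EuclideanSpace ℝ (Fin d) → EuclideanSpace ℝ (Fin d) × (Fin n → ℝ) :=
    fun p => (p.2, Pi.single p.1 1) with hφdef
  set T : Finset (Fin n × EuclideanSpace ℝ (Fin d)) :=
    Finset.univ.biUnion (fun i => (s i).image (fun a => (i, a))) with hTdef
  have hmemT : ∀ p : Fin n × EuclideanSpace ℝ (Fin d), p ∈ T ↔ p.2 ∈ s p.1 := by
    intro p
    simp only [hTdef, Finset.mem_biUnion, Finset.mem_image, Finset.mem_univ, true_and]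
    constructor
    · rintro ⟨i, a, ha, rfl⟩; exact ha
    · intro h; exact ⟨p.1, p.2, h, rfl⟩
  set w₀ : Fin n × EuclideanSpace ℝ (Fin d) → ℝ := fun p => wt p.1 p.2 with hw₀def
  have hdisj : (↑(Finset.univ : Finset (Fin n)) : Set (Fin n)).PairwiseDisjoint
      (fun i => (s i).image (fun a => ((i, a) : Fin n × EuclideanSpace ℝ (Fin d)))) := by
    intro i _ j _ hij
    simp only [Function.onFun, Finset.disjoint_left, Finset.mem_image]
    rintro p ⟨a, _, rfl⟩ ⟨b, _, hb⟩
    exact hij (congrArg Prod.fst hb).symm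
  have hsplit : ∑ p ∈ T, w₀ p • φ p = ∑ i, ∑ a ∈ s i, w₀ (i, a) • φ (i, a) := by
    rw [hTdef, Finset.sum_biUnion hdisj]
    exact Finset.sum_congr rfl fun i _ =>
      Finset.sum_image (fun a _ b _ h => congrArg Prod.snd h)
  have hTot : ∑ p ∈ T, w₀ p • φ p = (x, fun _ => 1) := by
    rw [hsplit]
    have heach : ∀ i, ∑ a ∈ s i, w₀ (i, a) • φ (i, a)
        = ((y₀ i, Pi.single i 1) : EuclideanSpace ℝ (Fin d) × (Fin n → ℝ)) := by
      intro i
      rw [Prod.ext_iff]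
      refine ⟨?_, ?_⟩
      · rw [Prod.fst_sum]
        simp only [hφdef, hw₀def, Prod.smul_mk]
        exact hwtsum i
      · rw [Prod.snd_sum]
        simp only [hφdef, hw₀def, Prod.smul_mk]
        rw [← Finset.sum_smul, hwt1 i, one_smul]
    rw [Finset.sum_congr rfl (fun i _ => heach i), Prod.ext_iff]
    refine ⟨?_, ?_⟩
    · rw [Prod.fst_sum]; exact hy₀sum
    · rw [Prod.snd_sum]; exact Finset.univ_sum_single (fun _ => (1:ℝ))
  obtain ⟨T', hT'T, w', hw'pos, hw'sum, hw'li⟩ :=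
    reduce_lin' φ T w₀ (fun p hp => hwt0 p.1 p.2 ((hmemT p).mp hp))
  rw [hTot] at hw'sum
  have hrankV : Module.finrank ℝ (EuclideanSpace ℝ (Fin d) × (Fin n → ℝ)) = d + n := by
    simp [Module.finrank_prod, finrank_euclideanSpace]
  have hcardT' : T'.card ≤ d + n := by
    have := hw'li.fintype_card_le_finrank
    rwa [Fintype.card_coe, hrankV] at this
  set fib : Fin n → Finset (Fin n × EuclideanSpace ℝ (Fin d)) :=
    fun i => T'.filter (fun p => p.1 = i) with hfibdef
  have hfib_sum : ∀ i, ∑ p ∈ fib i, w' p = 1 := by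
    intro i
    have h2 := congrFun (congrArg Prod.snd hw'sum) i
    rw [Prod.snd_sum] at h2
    simp only [Finset.sum_apply] at h2
    have heq : ∀ p ∈ T', (w' p • φ p).2 i = if p.1 = i then w' p else 0 := by
      intro p _
      simp only [hφdef, Prod.smul_mk, Pi.smul_apply, Pi.single_apply, smul_eq_mul,
        mul_ite, mul_one, mul_zero]
      exact if_congr eq_comm rfl rfl
    rw [Finset.sum_congr rfl heq] at h2
    rw [show fib i = T'.filter (fun p => p.1 = i) from rfl, Finset.sum_filter]
    exact h2
  have hfib_ne : ∀ i, (fib i).Nonempty := by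
    intro i
    by_contra h
    rw [Finset.not_nonempty_iff_eq_empty] at h
    have := hfib_sum i
    rw [h, Finset.sum_empty] at this
    norm_num at this
  set y : Fin n → EuclideanSpace ℝ (Fin d) := fun i => ∑ p ∈ fib i, w' p • p.2 with hydef
  have hmemA : ∀ p ∈ T', p.2 ∈ A p.1 := fun p hp => hsA p.1 ((hmemT p).mp (hT'T hp))
  have hyconv : ∀ i, y i ∈ convexHull ℝ (A i) := by
    intro i
    refine (convex_convexHull ℝ (A i)).sum_mem
      (fun p hp => (hw'pos p (Finset.mem_filter.mp hp).1).le) (hfib_sum i) ?_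
    intro p hp
    have h1 := hmemA p (Finset.mem_filter.mp hp).1
    rw [(Finset.mem_filter.mp hp).2] at h1
    exact subset_convexHull ℝ (A i) h1
  have hysum : ∑ i, y i = x := by
    have h1 := congrArg Prod.fst hw'sum
    rw [Prod.fst_sum] at h1
    have heq : ∀ p ∈ T', (w' p • φ p).1 = w' p • p.2 := fun p _ => rfl
    rw [Finset.sum_congr rfl heq] at h1
    show ∑ i, ∑ p ∈ T'.filter (fun p => p.1 = i), w' p • p.2 = x
    exact (Finset.sum_fiberwise_of_maps_to (fun p _ => Finset.mem_univ p.1)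
      (fun p => w' p • p.2)).trans (h1.trans rfl)
  have hsingle : ∀ i, (fib i).card = 1 → y i ∈ A i := by
    intro i hi
    obtain ⟨p, hp⟩ := Finset.card_eq_one.mp hi
    have hpmem : p ∈ fib i := hp ▸ Finset.mem_singleton_self p
    have hw1 : w' p = 1 := by
      have := hfib_sum i
      rwa [hp, Finset.sum_singleton] at this
    have hyi : y i = p.2 := by
      show ∑ q ∈ fib i, w' q • q.2 = p.2
      rw [hp, Finset.sum_singleton, hw1, one_smul]
    rw [hyi]
    have h1 := hmemA p (Finset.mem_filter.mp hpmem).1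
    rwa [(Finset.mem_filter.mp hpmem).2] at h1
  have hcount : ∑ i, (fib i).card = T'.card := by
    rw [hfibdef]
    exact (Finset.card_eq_sum_card_fiberwise (fun p _ => Finset.mem_univ p.1)).symm
  have hbad2 : ∀ i ∈ Finset.univ.filter (fun i => y i ∉ A i), 2 ≤ (fib i).card := by
    intro i hi
    have h1 := (hfib_ne i).card_pos
    by_contra h
    push_neg at h
    have hc1 : (fib i).card = 1 := by omega
    exact (Finset.mem_filter.mp hi).2 (hsingle i hc1)
  refine ⟨y, hyconv, hysum, ?_⟩
  have hsplit2 := Finset.sum_filter_add_sum_filter_not Finset.univ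
    (fun i => y i ∉ A i) (fun i => (fib i).card)
  have h2b : 2 * (Finset.univ.filter (fun i => y i ∉ A i)).card
      ≤ ∑ i ∈ Finset.univ.filter (fun i => y i ∉ A i), (fib i).card := by
    calc 2 * (Finset.univ.filter (fun i => y i ∉ A i)).card
        = (Finset.univ.filter (fun i => y i ∉ A i)).card • 2 := by rw [smul_eq_mul]; ring
    _ ≤ _ := Finset.card_nsmul_le_sum _ _ _ hbad2
  have h1g : (Finset.univ.filter (fun i => ¬ (y i ∉ A i))).card
      ≤ ∑ i ∈ Finset.univ.filter (fun i => ¬ (y i ∉ A i)), (fib i).card := by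
    calc (Finset.univ.filter (fun i => ¬ (y i ∉ A i))).card
        = (Finset.univ.filter (fun i => ¬ (y i ∉ A i))).card • 1 := by simp
    _ ≤ _ := Finset.card_nsmul_le_sum _ _ _ (fun i _ => (hfib_ne i).card_pos)
  have hbcard : (Finset.univ.filter (fun i => y i ∉ A i)).card
      + (Finset.univ.filter (fun i => ¬ (y i ∉ A i))).card = n := by
    rw [Finset.card_filter_add_card_filter_not]
    simp
  omega

theorem chebRad_nonneg {d : ℕ} {A : Set (EuclideanSpace ℝ (Fin d))}
    (hA : IsCompact A) (hne : A.Nonempty) : 0 ≤ chebRad A := by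
  refine le_ciInf fun c => ?_
  obtain ⟨a, ha⟩ := hne
  have hbdd : BddAbove ((fun a => ‖a - c‖) '' A) :=
    (hA.image (by fun_prop)).bddAbove
  exact le_trans (norm_nonneg _) (le_csSup hbdd ⟨a, ha, rfl⟩)

theorem norm_sub_le_of_mem {d : ℕ} {A : Set (EuclideanSpace ℝ (Fin d))}
    (hA : IsCompact A) {a : EuclideanSpace ℝ (Fin d)} (ha : a ∈ A)
    (c : EuclideanSpace ℝ (Fin d)) : ‖a - c‖ ≤ sSup ((fun a => ‖a - c‖) '' A) :=
  le_csSup (hA.image (by fun_prop)).bddAbove ⟨a, ha, rfl⟩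

/-- Key step: from `y ∈ conv A` we can pick `a ∈ A` increasing squared error
by at most `chebRad A ^ 2`. -/
theorem cheb_step {d : ℕ} {A : Set (EuclideanSpace ℝ (Fin d))}
    (hA : IsCompact A) (hne : A.Nonempty) {y : EuclideanSpace ℝ (Fin d)}
    (hy : y ∈ convexHull ℝ A) (e : EuclideanSpace ℝ (Fin d)) :
    ∃ a ∈ A, ‖e + (y - a)‖ ^ 2 ≤ ‖e‖ ^ 2 + chebRad A ^ 2 := by
  -- finite representation of y
  rw [convexHull_eq_union_convexHull_finite_subsets] at hy
  simp only [Set.mem_iUnion] at hy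
  obtain ⟨t, htA, hmem⟩ := hy
  obtain ⟨w, hw0, hw1, hwsum⟩ := Finset.mem_convexHull'.mp hmem
  have htne : t.Nonempty := by
    rcases Finset.eq_empty_or_nonempty t with rfl | h
    · simp at hw1
    · exact h
  -- the minimizer over t
  obtain ⟨b₀, hb₀t, hb₀min⟩ := Finset.exists_min_image t (fun b => ‖e + (y - b)‖ ^ 2) htne
  refine ⟨b₀, htA hb₀t, ?_⟩
  -- the weighted average bounds the minimum
  have havg : ∀ c : EuclideanSpace ℝ (Fin d),
      ‖e + (y - b₀)‖ ^ 2 ≤ ‖e‖ ^ 2 + (sSup ((fun a => ‖a - c‖) '' A)) ^ 2 := by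
    intro c
    set S := sSup ((fun a => ‖a - c‖) '' A) with hSdef
    have hkey : ∑ b ∈ t, w b * ‖e + (y - b)‖ ^ 2
        = ‖e‖ ^ 2 + (∑ b ∈ t, w b * ‖b - c‖ ^ 2 - ‖y - c‖ ^ 2) := by
      have expand : ∀ b : EuclideanSpace ℝ (Fin d),
          ‖e + (y - b)‖ ^ 2 = ‖e + y‖ ^ 2 - 2 * ⟪e + y, b⟫ + ‖b‖ ^ 2 := by
        intro b
        have : e + (y - b) = (e + y) - b := by abel
        rw [this, norm_sub_sq_real]
      have expand2 : ∀ b : EuclideanSpace ℝ (Fin d),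
          ‖b - c‖ ^ 2 = ‖b‖ ^ 2 - 2 * ⟪b, c⟫ + ‖c‖ ^ 2 := by
        intro b
        rw [norm_sub_sq_real]
      have hinner : ∑ b ∈ t, w b * ⟪e + y, b⟫ = ⟪e + y, y⟫ := by
        rw [← hwsum, inner_sum]
        exact Finset.sum_congr rfl fun b _ => by rw [real_inner_smul_right]
      have hinner2 : ∑ b ∈ t, w b * ⟪b, c⟫ = ⟪y, c⟫ := by
        rw [← hwsum, sum_inner]
        exact Finset.sum_congr rfl fun b _ => by rw [real_inner_smul_left]
      have hnorm : ∑ b ∈ t, w b * ‖b‖ ^ 2 = ∑ b ∈ t, w b * ‖b‖ ^ 2 := rfl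
      have lhs_eq : ∑ b ∈ t, w b * ‖e + (y - b)‖ ^ 2
          = ‖e + y‖ ^ 2 - 2 * ⟪e + y, y⟫ + ∑ b ∈ t, w b * ‖b‖ ^ 2 := by
        calc ∑ b ∈ t, w b * ‖e + (y - b)‖ ^ 2
            = ∑ b ∈ t, (w b * ‖e + y‖ ^ 2 - 2 * (w b * ⟪e + y, b⟫) + w b * ‖b‖ ^ 2) := by
              refine Finset.sum_congr rfl fun b _ => ?_
              rw [expand b]; ring
          _ = ‖e + y‖ ^ 2 - 2 * ⟪e + y, y⟫ + ∑ b ∈ t, w b * ‖b‖ ^ 2 := by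
              rw [Finset.sum_add_distrib, Finset.sum_sub_distrib, ← Finset.sum_mul, hw1,
                ← Finset.mul_sum, hinner]
              ring
      have rhs_eq : ∑ b ∈ t, w b * ‖b - c‖ ^ 2
          = ∑ b ∈ t, w b * ‖b‖ ^ 2 - 2 * ⟪y, c⟫ + ‖c‖ ^ 2 := by
        calc ∑ b ∈ t, w b * ‖b - c‖ ^ 2
            = ∑ b ∈ t, (w b * ‖b‖ ^ 2 - 2 * (w b * ⟪b, c⟫) + w b * ‖c‖ ^ 2) := by
              refine Finset.sum_congr rfl fun b _ => ?_
              rw [expand2 b]; ring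
          _ = _ := by
              rw [Finset.sum_add_distrib, Finset.sum_sub_distrib, ← Finset.sum_mul, hw1,
                ← Finset.mul_sum, hinner2]
              ring
      rw [lhs_eq, rhs_eq, norm_sub_sq_real, norm_add_sq_real]
      have : ⟪e + y, y⟫ = ⟪e, y⟫ + ‖y‖ ^ 2 := by
        rw [inner_add_left, real_inner_self_eq_norm_sq]
      rw [this]
      have : ⟪y, c⟫ = ⟪y, c⟫ := rfl
      ring_nf
    -- bound each ‖b - c‖ by S
    have hS0 : 0 ≤ S := by
      obtain ⟨a, ha⟩ := hne
      exact le_trans (norm_nonneg _) (norm_sub_le_of_mem hA ha c)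
    have hterm : ∑ b ∈ t, w b * ‖b - c‖ ^ 2 ≤ S ^ 2 := by
      calc ∑ b ∈ t, w b * ‖b - c‖ ^ 2 ≤ ∑ b ∈ t, w b * S ^ 2 := by
            refine Finset.sum_le_sum fun b hb => ?_
            refine mul_le_mul_of_nonneg_left ?_ (hw0 b hb)
            have h1 : ‖b - c‖ ≤ S := norm_sub_le_of_mem hA (htA hb) c
            exact pow_le_pow_left₀ (norm_nonneg _) h1 2
        _ = S ^ 2 := by rw [← Finset.sum_mul, hw1, one_mul]
    have hmin : ‖e + (y - b₀)‖ ^ 2 ≤ ∑ b ∈ t, w b * ‖e + (y - b)‖ ^ 2 := by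
      calc ‖e + (y - b₀)‖ ^ 2 = ∑ b ∈ t, w b * ‖e + (y - b₀)‖ ^ 2 := by
            rw [← Finset.sum_mul, hw1, one_mul]
        _ ≤ _ := Finset.sum_le_sum fun b hb =>
            mul_le_mul_of_nonneg_left (hb₀min b hb) (hw0 b hb)
    have hsq : ‖y - c‖ ^ 2 ≥ 0 := sq_nonneg _
    calc ‖e + (y - b₀)‖ ^ 2 ≤ ∑ b ∈ t, w b * ‖e + (y - b)‖ ^ 2 := hmin
      _ = ‖e‖ ^ 2 + (∑ b ∈ t, w b * ‖b - c‖ ^ 2 - ‖y - c‖ ^ 2) := hkey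
      _ ≤ ‖e‖ ^ 2 + S ^ 2 := by
          have := hterm
          nlinarith [hsq]
  -- pass to infimum
  have hR0 := chebRad_nonneg hA hne
  by_contra hcon
  push_neg at hcon
  set m := ‖e + (y - b₀)‖ ^ 2 with hmdef
  have hδ : chebRad A ^ 2 < m - ‖e‖ ^ 2 := by linarith
  have hδ0 : 0 ≤ m - ‖e‖ ^ 2 := le_trans (by positivity) hδ.le
  have hlt : chebRad A < Real.sqrt (m - ‖e‖ ^ 2) := by
    rw [show chebRad A = Real.sqrt (chebRad A ^ 2) from (Real.sqrt_sq hR0).symm]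
    exact Real.sqrt_lt_sqrt (by positivity) hδ
  obtain ⟨u, hu1, hu2⟩ := exists_between hlt
  obtain ⟨c, hc⟩ := exists_lt_of_ciInf_lt (show chebRad A < u from hu1)
  have hSc : sSup ((fun a => ‖a - c‖) '' A) < u := hc
  have hS0 : 0 ≤ sSup ((fun a => ‖a - c‖) '' A) := by
    obtain ⟨a, ha⟩ := hne
    exact le_trans (norm_nonneg _) (norm_sub_le_of_mem hA ha c)
  have h1 : (sSup ((fun a => ‖a - c‖) '' A)) ^ 2 < u ^ 2 := by
    exact pow_lt_pow_left₀ hSc hS0 (by norm_num)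
  have h2 : u ^ 2 < m - ‖e‖ ^ 2 := by
    have hu0 : 0 ≤ u := le_trans hR0 hu1.le
    calc u ^ 2 < (Real.sqrt (m - ‖e‖ ^ 2)) ^ 2 := by
          exact pow_lt_pow_left₀ hu2 hu0 (by norm_num)
      _ = m - ‖e‖ ^ 2 := Real.sq_sqrt hδ0
  have := havg c
  linarith

theorem greedy {d n : ℕ} (A : Fin n → Set (EuclideanSpace ℝ (Fin d)))
    (hne : ∀ i, (A i).Nonempty) (hc : ∀ i, IsCompact (A i))
    (R : ℝ) (hR' : ∀ i, chebRad (A i) ≤ R) (hR0 : 0 ≤ R)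
    (y : Fin n → EuclideanSpace ℝ (Fin d)) (hy : ∀ i, y i ∈ convexHull ℝ (A i))
    (B : Finset (Fin n)) :
    ∃ a : Fin n → EuclideanSpace ℝ (Fin d), (∀ i, a i ∈ A i) ∧
      ‖∑ i ∈ B, (y i - a i)‖ ^ 2 ≤ B.card * R ^ 2 := by
  classical
  induction B using Finset.induction_on with
  | empty =>
    exact ⟨fun i => (hne i).choose, fun i => (hne i).choose_spec, by simp⟩
  | insert j B hj ih =>
    obtain ⟨a, haA, herr⟩ := ih
    obtain ⟨b, hbA, hstep⟩ := cheb_step (hc j) (hne j) (hy j) (∑ i ∈ B, (y i - a i))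
    refine ⟨Function.update a j b, ?_, ?_⟩
    · intro i
      rcases eq_or_ne i j with rfl | hne'
      · simpa using hbA
      · rw [Function.update_of_ne hne']; exact haA i
    · rw [Finset.sum_insert hj]
      have hsum_eq : ∑ i ∈ B, (y i - Function.update a j b i) = ∑ i ∈ B, (y i - a i) :=
        Finset.sum_congr rfl fun i hi => by
          rw [Function.update_of_ne (fun h => hj (by rwa [h] at hi))]
      rw [hsum_eq, Function.update_self]
      have hchR : chebRad (A j) ^ 2 ≤ R ^ 2 :=
        pow_le_pow_left₀ (chebRad_nonneg (hc j) (hne j)) (hR' j) 2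
      have h1 : ‖(y j - b) + ∑ i ∈ B, (y i - a i)‖ ^ 2
          ≤ ‖∑ i ∈ B, (y i - a i)‖ ^ 2 + chebRad (A j) ^ 2 := by
        rw [add_comm]
        exact hstep
      rw [Finset.card_insert_of_notMem hj]
      push_cast
      calc ‖(y j - b) + ∑ i ∈ B, (y i - a i)‖ ^ 2
          ≤ ‖∑ i ∈ B, (y i - a i)‖ ^ 2 + chebRad (A j) ^ 2 := h1
        _ ≤ B.card * R ^ 2 + R ^ 2 := add_le_add herr hchR
        _ = (B.card + 1) * R ^ 2 := by ring

theorem shapley_folkman_radius {d n : ℕ} (A : Fin n → Set (EuclideanSpace ℝ (Fin d)))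
    (hne : ∀ i, (A i).Nonempty) (hc : ∀ i, IsCompact (A i))
    (R : ℝ) (hR : R = ⨆ i, chebRad (A i))
    (x : EuclideanSpace ℝ (Fin d)) (hx : x ∈ ∑ i, convexHull ℝ (A i)) :
    ∃ a : Fin n → EuclideanSpace ℝ (Fin d), (∀ i, a i ∈ A i) ∧
      ‖x - ∑ i, a i‖ ≤ R * Real.sqrt (min n d) := by
  classical
  have hR' : ∀ i, chebRad (A i) ≤ R := by
    intro i
    rw [hR]
    exact le_ciSup (f := fun i => chebRad (A i)) (Set.Finite.bddAbove (Set.finite_range _)) i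
  have hR0 : 0 ≤ R := by
    rcases Nat.eq_zero_or_pos n with hn | hn
    · subst hn
      rw [hR, Real.iSup_of_isEmpty]
    · have i0 : Fin n := ⟨0, hn⟩
      exact le_trans (chebRad_nonneg (hc i0) (hne i0)) (hR' i0)
  obtain ⟨y, hyconv, hysum, hbadd⟩ := sf_decomp A x hx
  obtain ⟨a, haA, herr⟩ := greedy A hne hc R hR' hR0 y hyconv
    (Finset.univ.filter (fun i => y i ∉ A i))
  set a' : Fin n → EuclideanSpace ℝ (Fin d) := fun i => if y i ∈ A i then y i else a i
    with ha'def
  have ha'A : ∀ i, a' i ∈ A i := by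
    intro i
    rw [ha'def]
    by_cases h : y i ∈ A i
    · simpa [h] using h
    · simpa [h] using haA i
  refine ⟨a', ha'A, ?_⟩
  have hdiff : x - ∑ i, a' i = ∑ i ∈ Finset.univ.filter (fun i => y i ∉ A i), (y i - a i) := by
    rw [← hysum, ← Finset.sum_sub_distrib]
    rw [← Finset.sum_subset (Finset.filter_subset (fun i => y i ∉ A i) Finset.univ)
      (fun i _ hi => ?_)]
    · refine Finset.sum_congr rfl fun i hi => ?_
      have hyi : y i ∉ A i := (Finset.mem_filter.mp hi).2
      rw [ha'def]
      simp [hyi]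
    · have hyi : y i ∈ A i := by
        by_contra h
        exact hi (Finset.mem_filter.mpr ⟨Finset.mem_univ i, h⟩)
      rw [ha'def]
      simp [hyi]
  rw [hdiff]
  have hcard : ((Finset.univ.filter (fun i => y i ∉ A i)).card : ℝ) ≤ min (n : ℝ) (d : ℝ) := by
    have h1 : (Finset.univ.filter (fun i => y i ∉ A i)).card ≤ n := by
      calc _ ≤ (Finset.univ : Finset (Fin n)).card := Finset.card_filter_le _ _
        _ = n := by simp
    have h2 := hbadd
    rw [le_min_iff]
    constructor <;> exact_mod_cast ‹_›
  have herr2 : ‖∑ i ∈ Finset.univ.filter (fun i => y i ∉ A i), (y i - a i)‖ ^ 2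
      ≤ min (n : ℝ) (d : ℝ) * R ^ 2 :=
    le_trans herr (mul_le_mul_of_nonneg_right hcard (sq_nonneg R))
  have hmin0 : (0:ℝ) ≤ min (n : ℝ) (d : ℝ) := le_min (by positivity) (by positivity)
  calc ‖∑ i ∈ Finset.univ.filter (fun i => y i ∉ A i), (y i - a i)‖
      = Real.sqrt (‖∑ i ∈ Finset.univ.filter (fun i => y i ∉ A i), (y i - a i)‖ ^ 2) :=
        (Real.sqrt_sq (norm_nonneg _)).symm
    _ ≤ Real.sqrt (min (n : ℝ) (d : ℝ) * R ^ 2) := Real.sqrt_le_sqrt herr2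
    _ = Real.sqrt (min (n : ℝ) (d : ℝ)) * R := by
        rw [Real.sqrt_mul hmin0, Real.sqrt_sq hR0]
    _ = R * Real.sqrt (min (n : ℝ) (d : ℝ)) := mul_comm _ _
end

section
/- Almost convexity of Minkowski sums: let A_1, …, A_n ⊆ ℝ^d be non-empty compact sets with A_i ⊆ B(c_i, R) for points c_i and some R ≥ 0. Then conv(A_1) + ⋯ + conv(A_n) ⊆ A_1 + ⋯ + A_n + B(0, R√d). -/
/-!
Shapley–Folkman: lift each `A i` to `A i × {eᵢ}` in `V × ℝⁿ`. Carathéodory's theorem writes the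
lifted point `(x / n, 𝟙 / n)` as a positive combination of affinely independent lifted points;
these lie in the hyperplane `∑ⱼ tⱼ = 1`, so there are at most `d + n` of them, and since every
fibre over `i` is nonempty, at most `d` fibres have more than one point. Grouping by fibres gives
`x = ∑ yᵢ` with `yᵢ ∈ conv (A i)` and `yᵢ ∈ A i` outside a set `S` of at most `d` indices.

Cassels' greedy step then replaces each `yᵢ`, `i ∈ S`, by some `aᵢ ∈ A i` such that the squared
norm of the accumulated error `∑ (aᵢ - yᵢ)` grows by at most `R²`, giving an error of norm at most
`R √d`.
-/

open Pointwise Metric Finset Module RealInnerProductSpace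

lemma Fintype.card_add_card_filter_one_lt_le_sum {ι : Type*} [Fintype ι] (f : ι → ℕ)
    (hf : ∀ i, 0 < f i) : Fintype.card ι + #{i | 1 < f i} ≤ ∑ i, f i := by
  rw [card_filter, Fintype.card_eq_sum_ones, ← sum_add_distrib]
  exact sum_le_sum fun i _ => by split_ifs <;> grind

lemma AffineIndependent.card_le_finrank_of_apply_eq {k M κ : Type*} [Field k] [AddCommGroup M]
    [Module k M] [FiniteDimensional k M] [Fintype κ] {p : κ → M} (hp : AffineIndependent k p)
    (f : M →ₗ[k] k) {r : k} (hr : r ≠ 0) (hf : ∀ j, f (p j) = r) :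
    Fintype.card κ ≤ finrank k M := by
  rcases isEmpty_or_nonempty κ with _ | ⟨⟨j⟩⟩
  · simp
  have hspan : vectorSpan k (Set.range p) ≤ LinearMap.ker f := by
    rw [vectorSpan_def, Submodule.span_le]
    rintro _ ⟨_, ⟨j₁, rfl⟩, _, ⟨j₂, rfl⟩, rfl⟩
    simp [hf]
  have hker : LinearMap.ker f ≠ ⊤ := fun h => hr (by
    rw [← hf j, LinearMap.mem_ker.1 (h ▸ Submodule.mem_top : p j ∈ LinearMap.ker f)])
  have := Submodule.finrank_lt hker
  have := Submodule.finrank_mono hspan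
  have := hp.card_le_finrank_succ
  omega

section ShapleyFolkman

variable {V : Type*} [AddCommGroup V] [Module ℝ V]

lemma mk_inv_card_mem_convexHull_iUnion_prod {ι : Type*} [Fintype ι] [Nonempty ι] [DecidableEq ι]
    (A : ι → Set V) {y : ι → V} (hy : ∀ i, y i ∈ convexHull ℝ (A i)) :
    (((Fintype.card ι : ℝ)⁻¹ • ∑ i, y i, fun _ => (Fintype.card ι : ℝ)⁻¹) : V × (ι → ℝ)) ∈
      convexHull ℝ (⋃ i, A i ×ˢ {(Pi.single i 1 : ι → ℝ)}) := by
  have hmem : ∀ i, ((y i, Pi.single i 1) : V × (ι → ℝ)) ∈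
      convexHull ℝ (⋃ i, A i ×ˢ {(Pi.single i 1 : ι → ℝ)}) :=
    fun i => convexHull_mono (Set.subset_iUnion (fun i => A i ×ˢ {(Pi.single i 1 : ι → ℝ)}) i)
      (mk_mem_convexHull_prod (hy i) (subset_convexHull ℝ _ rfl))
  convert (convex_convexHull ℝ _).sum_mem (t := univ) (w := fun _ => (Fintype.card ι : ℝ)⁻¹)
    (fun _ _ => by positivity) (by simp) (fun i _ => hmem i) using 1
  refine Prod.ext ?_ (funext fun j => ?_)
  · simp [Prod.fst_sum, smul_sum]
  · simp [Prod.snd_sum, Finset.sum_apply, Pi.single_apply]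

theorem shapley_folkman [FiniteDimensional ℝ V] {ι : Type*} [Fintype ι] (A : ι → Set V)
    {y : ι → V} (hy : ∀ i, y i ∈ convexHull ℝ (A i)) :
    ∃ z : ι → V, ∃ S : Finset ι, #S ≤ finrank ℝ V ∧ (∀ i, z i ∈ convexHull ℝ (A i)) ∧
      (∀ i ∉ S, z i ∈ A i) ∧ ∑ i, z i = ∑ i, y i := by
  classical
  rcases isEmpty_or_nonempty ι with hι | hι
  · exact ⟨y, ∅, by simp, hy, fun i => isEmptyElim i, rfl⟩
  set m : ℝ := (Fintype.card ι : ℝ)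
  have hm : 0 < m := by simp [m, Fintype.card_pos]
  obtain ⟨κ, _, p, w, hpT, hp, hw_pos, -, hwp⟩ :=
    eq_pos_convex_span_of_mem_convexHull (mk_inv_card_mem_convexHull_iUnion_prod A hy)
  have hpT' : ∀ k, ∃ i, (p k).1 ∈ A i ∧ (p k).2 = Pi.single i 1 := fun k => by
    simpa using hpT ⟨k, rfl⟩
  choose idx hidxA hidx using hpT'
  set F : ι → Finset κ := fun i => {k | idx k = i}
  have hF : ∀ i, ∑ k ∈ F i, w k = m⁻¹ := fun i => by
    have := congrFun (congrArg Prod.snd hwp) i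
    simpa [F, Prod.snd_sum, Finset.sum_apply, hidx, Pi.single_apply, eq_comm, sum_filter]
      using this
  have hFne : ∀ i, (F i).Nonempty := fun i =>
    nonempty_of_sum_ne_zero ((hF i).trans_ne (inv_ne_zero hm.ne'))
  have hpx : ∑ k, w k • (p k).1 = m⁻¹ • ∑ i, y i := by
    simpa [Prod.fst_sum] using congrArg Prod.fst hwp
  refine ⟨fun i => (F i).centerMass w (fun k => (p k).1), ({i | 1 < #(F i)} : Finset ι), ?_,
    fun i => ?_, fun i hi => ?_, ?_⟩
  · have hκ : Fintype.card κ = ∑ i, #(F i) := by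
      simpa using card_eq_sum_card_fiberwise (s := univ) (t := univ) (f := idx) (by simp)
    have := hp.card_le_finrank_of_apply_eq
      ((∑ i, LinearMap.proj i).comp (LinearMap.snd ℝ V (ι → ℝ))) one_ne_zero
      (fun k => by simp [hidx])
    have := Fintype.card_add_card_filter_one_lt_le_sum (fun i => #(F i)) fun i => (hFne i).card_pos
    rw [finrank_prod, finrank_fintype_fun_eq_card] at *
    omega
  · exact (F i).centerMass_mem_convexHull (fun k _ => (hw_pos k).le) ((hF i).symm ▸ inv_pos.2 hm)
      fun k hk => (mem_filter.1 hk).2 ▸ hidxA k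
  · obtain ⟨k, hk⟩ := card_eq_one.1 (le_antisymm (by simpa using hi) (hFne i).card_pos)
    have hki : k ∈ F i := hk ▸ mem_singleton_self k
    simp only [F, mem_filter, mem_univ, true_and] at hki
    simp only [hk, centerMass_singleton k _ (hw_pos k).ne']
    exact hki ▸ hidxA k
  · simp only [centerMass, hF, inv_inv, ← smul_sum]
    rw [sum_fiberwise univ idx (fun k => w k • (p k).1), hpx, smul_inv_smul₀ hm.ne']

end ShapleyFolkman

section Cassels

variable {E : Type*} [NormedAddCommGroup E] [InnerProductSpace ℝ E]

lemma exists_norm_add_sub_sq_le {A : Set E} {c x : E} {R : ℝ} (hA : A ⊆ closedBall c R)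
    (hx : x ∈ convexHull ℝ A) (v : E) : ∃ a ∈ A, ‖v + (a - x)‖ ^ 2 ≤ ‖v‖ ^ 2 + R ^ 2 := by
  -- `‖v + (a - x)‖² - ‖a - c‖²` is affine in `a`, so its minimum over `conv A` is attained on `A`.
  obtain ⟨a, ha, hle⟩ := ((innerₛₗ ℝ (v - (x - c))).concaveOn convex_univ)
    |>.exists_le_of_mem_convexHull (Set.subset_univ A) hx
  have hac : ‖(a - x) + (x - c)‖ ≤ R := by simpa [← dist_eq_norm] using hA ha
  have hle' : ⟪v - (x - c), a - x⟫ ≤ 0 := by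
    rw [inner_sub_right, sub_nonpos]
    exact hle
  refine ⟨a, ha, ?_⟩
  have := pow_le_pow_left₀ (norm_nonneg _) hac 2
  rw [norm_add_sq_real] at this ⊢
  rw [inner_sub_left, real_inner_comm (a - x) (x - c)] at hle'
  nlinarith [sq_nonneg ‖x - c‖]

lemma exists_norm_sum_sub_sq_le {ι : Type*} {A : ι → Set E} {c : ι → E} {R : ℝ}
    (hA : ∀ i, A i ⊆ closedBall (c i) R) (y : ι → E) (S : Finset ι)
    (hy : ∀ i ∈ S, y i ∈ convexHull ℝ (A i)) :
    ∃ a : ι → E, (∀ i ∈ S, a i ∈ A i) ∧ (∀ i ∉ S, a i = y i) ∧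
      ‖∑ i ∈ S, (a i - y i)‖ ^ 2 ≤ #S * R ^ 2 := by
  classical
  induction S using Finset.induction_on with
  | empty => exact ⟨y, by simp, fun _ _ => rfl, by simp⟩
  | @insert j S hj ih =>
    obtain ⟨a, haA, hay, hnorm⟩ := ih fun i hi => hy i (mem_insert_of_mem hi)
    obtain ⟨b, hb, hbnorm⟩ :=
      exists_norm_add_sub_sq_le (hA j) (hy j (mem_insert_self j S)) (∑ i ∈ S, (a i - y i))
    have hsum : ∑ i ∈ S, (Function.update a j b i - y i) = ∑ i ∈ S, (a i - y i) :=
      sum_congr rfl fun i hi => by rw [Function.update_of_ne (ne_of_mem_of_not_mem hi hj)]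
    refine ⟨Function.update a j b, ?_, ?_, ?_⟩
    · intro i hi
      rcases mem_insert.1 hi with rfl | hi
      · simpa
      · simpa [ne_of_mem_of_not_mem hi hj] using haA i hi
    · intro i hi
      rw [mem_insert, not_or] at hi
      simpa [hi.1] using hay i hi.2
    · rw [sum_insert hj, hsum, Function.update_self, add_comm, card_insert_of_notMem hj]
      push_cast
      linarith

lemma exists_forall_mem_norm_sum_sub_le {ι : Type*} [Fintype ι] {A : ι → Set E} {c : ι → E}
    {R : ℝ} (hR : 0 ≤ R) (hA : ∀ i, A i ⊆ closedBall (c i) R) (y : ι → E) (S : Finset ι)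
    (hyS : ∀ i ∈ S, y i ∈ convexHull ℝ (A i)) (hy : ∀ i ∉ S, y i ∈ A i) :
    ∃ a : ι → E, (∀ i, a i ∈ A i) ∧ ‖∑ i, a i - ∑ i, y i‖ ≤ R * √(#S : ℝ) := by
  obtain ⟨a, haS, hay, hnorm⟩ := exists_norm_sum_sub_sq_le hA y S hyS
  refine ⟨a, fun i => ?_, ?_⟩
  · by_cases hi : i ∈ S
    · exact haS i hi
    · rw [hay i hi]
      exact hy i hi
  have hsum : ∑ i, a i - ∑ i, y i = ∑ i ∈ S, (a i - y i) := by
    rw [← sum_sub_distrib]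
    exact (sum_subset (subset_univ S) fun i _ hi => by simp [hay i hi]).symm
  rw [hsum, ← Real.sqrt_sq (norm_nonneg _), ← Real.sqrt_sq hR, ← Real.sqrt_mul (sq_nonneg R)]
  exact Real.sqrt_le_sqrt (by linarith)

end Cassels

theorem almost_convexity_general {d n : ℕ} (A : Fin n → Set (EuclideanSpace ℝ (Fin d)))
    (c : Fin n → EuclideanSpace ℝ (Fin d)) (R : ℝ) (hR : 0 ≤ R)
    (hball : ∀ i, A i ⊆ closedBall (c i) R) :
    (∑ i, convexHull ℝ (A i)) ⊆ (∑ i, A i) + closedBall 0 (R * Real.sqrt d) := by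
  intro x hx
  obtain ⟨y, hy, rfl⟩ := (Set.mem_fintype_sum _ x).1 hx
  obtain ⟨z, S, hS, hz, hzA, hzy⟩ := shapley_folkman A hy
  obtain ⟨a, ha, hdist⟩ := exists_forall_mem_norm_sum_sub_le hR hball z S (fun i _ => hz i) hzA
  refine ⟨∑ i, a i, Set.finsetSum_mem_finsetSum _ _ _ fun i _ => ha i,
    ∑ i, z i - ∑ i, a i, ?_, (add_sub_cancel _ _).trans hzy⟩
  rw [mem_closedBall_zero_iff, norm_sub_rev]
  rw [finrank_euclideanSpace_fin] at hS
  calc _ ≤ R * √(#S : ℝ) := hdist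
    _ ≤ R * √d := by gcongr

theorem almost_convexity {d n : ℕ} (A : Fin n → Set (EuclideanSpace ℝ (Fin d)))
    (hne : ∀ i, (A i).Nonempty) (hc : ∀ i, IsCompact (A i))
    (c : Fin n → EuclideanSpace ℝ (Fin d)) (R : ℝ) (hR : 0 ≤ R)
    (hball : ∀ i, A i ⊆ closedBall (c i) R) :
    (∑ i, convexHull ℝ (A i)) ⊆ (∑ i, A i) + closedBall 0 (R * Real.sqrt d) :=
  almost_convexity_general A c R hR hball
end

section
/- One-step absorption: let A_1, …, A_n ⊆ ℝ^d be non-empty finite sets and b_i, c_i ∈ ℝ^d. Suppose B(b_i, q) ⊆ conv(A_i) and A_i ⊆ B(c_i, R) for all i, with q, R > 0, and suppose R√d ≤ nQ for some Q > 0. Then B(b_1, q) + ⋯ + B(b_n, q) ⊆ (⋃_{x∈A_1} B(x, Q)) + ⋯ + (⋃_{x∈A_n} B(x, Q)). -/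
open Pointwise Metric Finset

set_option linter.unusedSectionVars false
set_option maxHeartbeats 1000000

variable {E : Type*} [NormedAddCommGroup E] [InnerProductSpace ℝ E]

-- weighted min ≤ weighted average
lemma weighted_min (F : Finset E) (w : E → ℝ) (hw0 : ∀ a ∈ F, 0 ≤ w a)
    (hw1 : ∑ a ∈ F, w a = 1) (f : E → ℝ) :
    ∃ a ∈ F, w a ≠ 0 ∧ f a ≤ ∑ b ∈ F, w b * f b := by
  by_contra h
  push_neg at h
  have hex : ∃ a ∈ F, w a ≠ 0 := by
    by_contra h2
    push_neg at h2
    rw [Finset.sum_eq_zero h2] at hw1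
    exact one_ne_zero hw1.symm
  obtain ⟨a0, ha0, hwa0⟩ := hex
  have hlt : ∑ b ∈ F, w b * (∑ b ∈ F, w b * f b) < ∑ b ∈ F, w b * f b := by
    have := Finset.sum_lt_sum (f := fun b => w b * (∑ b ∈ F, w b * f b))
      (g := fun b => w b * f b) (s := F)
      (fun b hb => by
        rcases eq_or_ne (w b) 0 with h0 | h0
        · simp [h0]
        · exact le_of_lt (mul_lt_mul_of_pos_left (h b hb h0) ((hw0 b hb).lt_of_ne (Ne.symm h0))))
      ⟨a0, ha0, mul_lt_mul_of_pos_left (h a0 ha0 hwa0) ((hw0 a0 ha0).lt_of_ne (Ne.symm hwa0))⟩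
    exact this
  rw [← Finset.sum_mul, hw1, one_mul] at hlt
  exact lt_irrefl _ hlt

lemma avg_norm_sq (F : Finset E) (w : E → ℝ) (hw1 : ∑ a ∈ F, w a = 1)
    (x v : E) (hx : ∑ a ∈ F, w a • a = x) :
    ∑ a ∈ F, w a * ‖v + (x - a)‖ ^ 2 = ‖v‖ ^ 2 + ∑ a ∈ F, w a * ‖x - a‖ ^ 2 := by
  have hzero : ∑ a ∈ F, w a • (x - a) = 0 := by
    simp_rw [smul_sub]
    rw [Finset.sum_sub_distrib, ← Finset.sum_smul, hw1, one_smul, hx, sub_self]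
  have hinner : ∑ a ∈ F, w a * (inner ℝ v (x - a) : ℝ) = 0 := by
    have : ∑ a ∈ F, (inner ℝ v (w a • (x - a)) : ℝ) = (inner ℝ v (0:E) : ℝ) := by
      rw [← inner_sum, hzero]
    simpa [real_inner_smul_right, mul_comm] using this
  have expand : ∀ a ∈ F, w a * ‖v + (x - a)‖ ^ 2
      = w a * ‖v‖ ^ 2 + 2 * (w a * (inner ℝ v (x - a) : ℝ)) + w a * ‖x - a‖ ^ 2 := by
    intro a _
    rw [@norm_add_sq_real]
    ring
  rw [Finset.sum_congr rfl expand, Finset.sum_add_distrib, Finset.sum_add_distrib,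
    ← Finset.mul_sum, ← Finset.sum_mul, hw1, hinner]
  ring


lemma variance_le (F : Finset E) (w : E → ℝ) (hw0 : ∀ a ∈ F, 0 ≤ w a)
    (hw1 : ∑ a ∈ F, w a = 1) (x c : E) (hx : ∑ a ∈ F, w a • a = x)
    {R : ℝ} (hF : ∀ a ∈ F, ‖a - c‖ ≤ R) :
    ∑ a ∈ F, w a * ‖x - a‖ ^ 2 ≤ R ^ 2 := by
  have hR : 0 ≤ R := by
    have hFne : F.Nonempty := by
      rcases Finset.eq_empty_or_nonempty F with h | h
      · rw [h, Finset.sum_empty] at hw1; exact absurd hw1.symm one_ne_zero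
      · exact h
    obtain ⟨a, ha⟩ := hFne
    exact le_trans (norm_nonneg _) (hF a ha)
  have key := avg_norm_sq F w hw1 x (c - x) hx
  have heq : ∀ a ∈ F, w a * ‖(c - x) + (x - a)‖ ^ 2 = w a * ‖a - c‖ ^ 2 := by
    intro a _
    rw [show (c - x) + (x - a) = c - a by abel, ← norm_neg, neg_sub]
  rw [Finset.sum_congr rfl heq] at key
  have hle : ∑ a ∈ F, w a * ‖a - c‖ ^ 2 ≤ R ^ 2 := by
    calc ∑ a ∈ F, w a * ‖a - c‖ ^ 2 ≤ ∑ a ∈ F, w a * R ^ 2 := by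
          refine Finset.sum_le_sum fun a ha => ?_
          exact mul_le_mul_of_nonneg_left
            (pow_le_pow_left₀ (norm_nonneg _) (hF a ha) 2) (hw0 a ha)
      _ = R ^ 2 := by rw [← Finset.sum_mul, hw1, one_mul]
  nlinarith [sq_nonneg ‖c - x‖, key]


/-- Inductive averaging/choice lemma. -/
lemma choice_lemma {n : ℕ} (F : Fin n → Finset E) (w : Fin n → E → ℝ)
    (x : Fin n → E) (σ : Fin n → ℝ)
    (hw0 : ∀ i, ∀ a ∈ F i, 0 ≤ w i a) (hw1 : ∀ i, ∑ a ∈ F i, w i a = 1)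
    (hx : ∀ i, ∑ a ∈ F i, w i a • a = x i)
    (hσ : ∀ i, ∑ a ∈ F i, w i a * ‖x i - a‖ ^ 2 ≤ σ i)
    (S : Finset (Fin n)) :
    ∀ v : E, ∃ g : Fin n → E, (∀ i ∈ S, g i ∈ F i) ∧
      ‖v + ∑ i ∈ S, (x i - g i)‖ ^ 2 ≤ ‖v‖ ^ 2 + ∑ i ∈ S, σ i := by
  classical
  induction S using Finset.induction_on with
  | empty => intro v; exact ⟨fun _ => 0, by simp, by simp⟩
  | @insert i S hi ih =>
    intro v
    obtain ⟨a₀, ha₀F, _, ha₀⟩ := weighted_min (F i) (w i) (hw0 i) (hw1 i)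
      (fun a => ‖v + (x i - a)‖ ^ 2)
    have hbound : ‖v + (x i - a₀)‖ ^ 2 ≤ ‖v‖ ^ 2 + σ i := by
      calc ‖v + (x i - a₀)‖ ^ 2 ≤ ∑ b ∈ F i, w i b * ‖v + (x i - b)‖ ^ 2 := ha₀
        _ = ‖v‖ ^ 2 + ∑ b ∈ F i, w i b * ‖x i - b‖ ^ 2 :=
            avg_norm_sq (F i) (w i) (hw1 i) (x i) v (hx i)
        _ ≤ ‖v‖ ^ 2 + σ i := by linarith [hσ i]
    obtain ⟨g, hgF, hg⟩ := ih (v + (x i - a₀))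
    refine ⟨Function.update g i a₀, ?_, ?_⟩
    · intro j hj
      rcases Finset.mem_insert.mp hj with rfl | hj
      · rw [Function.update_self]; exact ha₀F
      · rw [Function.update_of_ne (ne_of_mem_of_not_mem hj hi)]; exact hgF j hj
    · rw [Finset.sum_insert hi, Finset.sum_insert hi, Function.update_self]
      have hsum : ∑ j ∈ S, (x j - Function.update g i a₀ j) = ∑ j ∈ S, (x j - g j) :=
        Finset.sum_congr rfl fun j hj => by
          rw [Function.update_of_ne (ne_of_mem_of_not_mem hj hi)]
      rw [hsum, show v + (x i - a₀ + ∑ j ∈ S, (x j - g j))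
          = (v + (x i - a₀)) + ∑ j ∈ S, (x j - g j) by abel]
      linarith [hg]


noncomputable def supp (F : Finset E) (w : E → ℝ) : Finset E :=
  F.filter (fun a => w a ≠ 0)

lemma mem_supp {F : Finset E} {w : E → ℝ} {a : E} :
    a ∈ supp F w ↔ a ∈ F ∧ w a ≠ 0 := Finset.mem_filter

lemma supp_subset {F : Finset E} {w : E → ℝ} : supp F w ⊆ F := Finset.filter_subset _ _

lemma sf_reduce {n : ℕ} [FiniteDimensional ℝ E] (F : Fin n → Finset E) (z : E) :
    ∀ N : ℕ, ∀ w : Fin n → E → ℝ, (∀ i, ∀ a ∈ F i, 0 ≤ w i a) → (∀ i, ∑ a ∈ F i, w i a = 1) →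
    (∑ i, ∑ a ∈ F i, w i a • a = z) → (∑ i, (supp (F i) (w i)).card ≤ N) →
    ∃ w' : Fin n → E → ℝ, (∀ i, ∀ a ∈ F i, 0 ≤ w' i a) ∧ (∀ i, ∑ a ∈ F i, w' i a = 1) ∧
      (∑ i, ∑ a ∈ F i, w' i a • a = z) ∧
      ((Finset.univ.filter fun i => 2 ≤ (supp (F i) (w' i)).card).card ≤ Module.finrank ℝ E) := by
  classical
  intro N
  induction N with
  | zero =>
    intro w hw0 hw1 hz hN
    refine ⟨w, hw0, hw1, hz, ?_⟩
    have hc : ∀ i, (supp (F i) (w i)).card = 0 := fun i =>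
      Nat.le_zero.mp (le_trans (Finset.single_le_sum
        (f := fun i => (supp (F i) (w i)).card) (fun j _ => Nat.zero_le _)
        (Finset.mem_univ i)) hN)
    have : (Finset.univ.filter fun i => 2 ≤ (supp (F i) (w i)).card) = ∅ := by
      apply Finset.filter_false_of_mem
      intro i _
      rw [hc i]; omega
    rw [this]; simp
  | succ N ih =>
    intro w hw0 hw1 hz hN
    by_cases hbad : (Finset.univ.filter fun i => 2 ≤ (supp (F i) (w i)).card).card
        ≤ Module.finrank ℝ E
    · exact ⟨w, hw0, hw1, hz, hbad⟩
    push_neg at hbad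
    set B := Finset.univ.filter (fun i : Fin n => 2 ≤ (supp (F i) (w i)).card) with hB
    -- choose two distinct support points for each bad index
    have h2 : ∀ i : {i // i ∈ B}, ∃ pq : E × E, pq.1 ∈ supp (F i.1) (w i.1) ∧
        pq.2 ∈ supp (F i.1) (w i.1) ∧ pq.1 ≠ pq.2 := by
      rintro ⟨i, hiB⟩
      have h1 : 1 < (supp (F i) (w i)).card :=
        lt_of_lt_of_le one_lt_two (Finset.mem_filter.mp hiB).2
      obtain ⟨p, hp, q, hq, hpq⟩ := Finset.one_lt_card.mp h1
      exact ⟨(p, q), hp, hq, hpq⟩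
    choose pq hpq1 hpq2 hpqne using h2
    -- linear dependence
    have hcard : Module.finrank ℝ E < Fintype.card {i // i ∈ B} := by
      rwa [Fintype.card_coe]
    have hnli : ¬ LinearIndependent ℝ (fun i : {i // i ∈ B} => (pq i).1 - (pq i).2) := by
      intro h
      exact absurd h.fintype_card_le_finrank (by omega)
    obtain ⟨g, hgsum, i₀, hgi₀⟩ := Fintype.not_linearIndependent_iff.mp hnli
    -- normalize signs
    set g' : {i // i ∈ B} → ℝ := fun i => |g i| with hg'
    set p' : {i // i ∈ B} → E := fun i => if 0 ≤ g i then (pq i).1 else (pq i).2 with hp'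
    set q' : {i // i ∈ B} → E := fun i => if 0 ≤ g i then (pq i).2 else (pq i).1 with hq'
    have hrel' : ∑ i, g' i • (p' i - q' i) = 0 := by
      rw [← hgsum]
      refine Finset.sum_congr rfl fun i _ => ?_
      by_cases h : 0 ≤ g i
      · simp [hg', hp', hq', h, abs_of_nonneg h]
      · simp only [hg', hp', hq', if_neg h, abs_of_neg (not_le.mp h)]
        rw [smul_sub, smul_sub, neg_smul, neg_smul]
        abel
    have hp'supp : ∀ i : {i // i ∈ B}, p' i ∈ supp (F i.1) (w i.1) := by
      intro i; by_cases h : 0 ≤ g i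
      · simp only [hp', if_pos h]; exact hpq1 i
      · simp only [hp', if_neg h]; exact hpq2 i
    have hq'supp : ∀ i : {i // i ∈ B}, q' i ∈ supp (F i.1) (w i.1) := by
      intro i; by_cases h : 0 ≤ g i
      · simp only [hq', if_pos h]; exact hpq2 i
      · simp only [hq', if_neg h]; exact hpq1 i
    have hp'q'ne : ∀ i : {i // i ∈ B}, p' i ≠ q' i := by
      intro i; by_cases h : 0 ≤ g i
      · simp only [hp', hq', if_pos h]; exact hpqne i
      · simp only [hp', hq', if_neg h]; exact (hpqne i).symm
    have hg'0 : ∀ i, 0 ≤ g' i := fun i => abs_nonneg _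
    -- extend to Fin n
    set ν : Fin n → ℝ := fun i => if h : i ∈ B then g' ⟨i, h⟩ else 0 with hν
    set p : Fin n → E := fun i => if h : i ∈ B then p' ⟨i, h⟩ else 0 with hpdef
    set qf : Fin n → E := fun i => if h : i ∈ B then q' ⟨i, h⟩ else 0 with hqdef
    have hν0 : ∀ i, 0 ≤ ν i := by
      intro i
      by_cases h : i ∈ B
      · simp only [hν, dif_pos h]; exact hg'0 _
      · simp only [hν, dif_neg h]; exact le_refl 0
    have hνB : ∀ i, ν i ≠ 0 → i ∈ B := by
      intro i h; by_contra hi; simp only [hν, dif_neg hi] at h; exact h rfl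
    have hfacts : ∀ i, ν i ≠ 0 → p i ∈ supp (F i) (w i) ∧ qf i ∈ supp (F i) (w i) ∧ p i ≠ qf i := by
      intro i h
      have hiB := hνB i h
      simp only [hpdef, hqdef, dif_pos hiB]
      exact ⟨hp'supp ⟨i, hiB⟩, hq'supp ⟨i, hiB⟩, hp'q'ne ⟨i, hiB⟩⟩
    have hrel : ∑ i : Fin n, ν i • (p i - qf i) = 0 := by
      rw [← Finset.sum_subset (Finset.subset_univ B)
        (fun i _ hi => by simp only [hν, dif_neg hi, zero_smul])]
      rw [← Finset.sum_attach B (fun i => ν i • (p i - qf i))]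
      rw [← hrel']
      refine Finset.sum_congr rfl fun i _ => ?_
      simp only [hν, hpdef, hqdef, dif_pos i.2, Subtype.coe_eta]
    have hi₀ : ν i₀.1 ≠ 0 := by
      simp only [hν, dif_pos i₀.2, Subtype.coe_eta, hg']
      simpa using hgi₀
    -- choose the step size
    set T := Finset.univ.filter (fun i : Fin n => ν i ≠ 0) with hT
    have hTne : T.Nonempty := ⟨i₀.1, Finset.mem_filter.mpr ⟨Finset.mem_univ _, hi₀⟩⟩
    set t := T.inf' hTne (fun i => w i (qf i) / ν i) with ht
    obtain ⟨i₁, hi₁T, hti₁⟩ := Finset.exists_mem_eq_inf' hTne (fun i => w i (qf i) / ν i)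
    have hνi₁ : ν i₁ ≠ 0 := (Finset.mem_filter.mp hi₁T).2
    have ht0 : 0 ≤ t := by
      rw [ht]
      apply Finset.le_inf'
      intro i hiT
      have hνi : ν i ≠ 0 := (Finset.mem_filter.mp hiT).2
      exact div_nonneg (hw0 i _ (supp_subset (hfacts i hνi).2.1)) (hν0 i)
    have htle : ∀ i, ν i ≠ 0 → t * ν i ≤ w i (qf i) := by
      intro i hνi
      have hiT : i ∈ T := Finset.mem_filter.mpr ⟨Finset.mem_univ _, hνi⟩
      have := Finset.inf'_le (fun i => w i (qf i) / ν i) hiT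
      rw [← ht] at this
      exact (le_div_iff₀ ((hν0 i).lt_of_ne (Ne.symm hνi))).mp this
    -- the new weights
    set D : Fin n → E → ℝ := fun i a => (if a = p i then (1:ℝ) else 0) - (if a = qf i then 1 else 0)
      with hD
    set w' : Fin n → E → ℝ := fun i a => w i a + t * ν i * D i a with hw'
    have hzero : ∀ i, ν i = 0 → ∀ a, w' i a = w i a := by
      intro i h a; simp only [hw']; rw [h]; ring
    -- (1) nonnegativity
    have c1 : ∀ i, ∀ a ∈ F i, 0 ≤ w' i a := by
      intro i a haF
      rcases eq_or_ne (ν i) 0 with h | h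
      · rw [hzero i h a]; exact hw0 i a haF
      obtain ⟨hpsupp, hqsupp, hpq⟩ := hfacts i h
      have hνpos : 0 < ν i := (hν0 i).lt_of_ne (Ne.symm h)
      by_cases hap : a = p i
      · have : D i a = 1 := by
          simp only [hD, if_pos hap, if_neg (hap ▸ hpq)]
          ring
        simp only [hw', this, mul_one]
        exact add_nonneg (hw0 i a haF) (mul_nonneg ht0 (hν0 i))
      by_cases haq : a = qf i
      · have : D i a = -1 := by
          simp only [hD, if_neg hap, if_pos haq]
          ring
        simp only [hw', this]
        have := htle i h
        subst haq
        nlinarith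
      · have : D i a = 0 := by simp only [hD, if_neg hap, if_neg haq]; ring
        simp only [hw', this, mul_zero, add_zero]
        exact hw0 i a haF
    -- (2) sums one
    have c2 : ∀ i, ∑ a ∈ F i, w' i a = 1 := by
      intro i
      rcases eq_or_ne (ν i) 0 with h | h
      · rw [Finset.sum_congr rfl fun a _ => hzero i h a]; exact hw1 i
      obtain ⟨hpsupp, hqsupp, hpq⟩ := hfacts i h
      have hDsum : ∑ a ∈ F i, D i a = 0 := by
        simp only [hD]
        rw [Finset.sum_sub_distrib, Finset.sum_ite_eq' (F i) (p i) (fun _ => (1:ℝ)),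
          Finset.sum_ite_eq' (F i) (qf i) (fun _ => (1:ℝ)),
          if_pos (supp_subset hpsupp), if_pos (supp_subset hqsupp), sub_self]
      have : ∑ a ∈ F i, w' i a = (∑ a ∈ F i, w i a) + t * ν i * ∑ a ∈ F i, D i a := by
        rw [Finset.mul_sum, ← Finset.sum_add_distrib]
      rw [this, hDsum, hw1 i, mul_zero, add_zero]
    -- (3) barycenter
    have c3 : ∑ i, ∑ a ∈ F i, w' i a • a = z := by
      have key : ∀ i, ∑ a ∈ F i, w' i a • a
          = (∑ a ∈ F i, w i a • a) + t • (ν i • (p i - qf i)) := by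
        intro i
        rcases eq_or_ne (ν i) 0 with h | h
        · rw [Finset.sum_congr rfl fun a _ => by rw [hzero i h a], h, zero_smul, smul_zero,
            add_zero]
        obtain ⟨hpsupp, hqsupp, hpq⟩ := hfacts i h
        have hsplit : ∀ a ∈ F i, w' i a • a = w i a • a + (t * ν i) • (D i a • a) := by
          intro a _
          simp only [hw']
          rw [add_smul, smul_smul]
        rw [Finset.sum_congr rfl hsplit, Finset.sum_add_distrib, ← Finset.smul_sum]
        congr 1
        have hDsum : ∑ a ∈ F i, D i a • a = p i - qf i := by
          have : ∀ a ∈ F i, D i a • a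
              = (if a = p i then a else 0) - (if a = qf i then a else 0) := by
            intro a _
            simp only [hD, sub_smul, ite_smul, one_smul, zero_smul]
          rw [Finset.sum_congr rfl this, Finset.sum_sub_distrib,
            Finset.sum_ite_eq' (F i) (p i) (fun a => a),
            Finset.sum_ite_eq' (F i) (qf i) (fun a => a),
            if_pos (supp_subset hpsupp), if_pos (supp_subset hqsupp)]
        rw [hDsum, smul_smul, mul_smul]
      rw [Finset.sum_congr rfl fun i _ => key i, Finset.sum_add_distrib, hz,
        ← Finset.smul_sum, hrel, smul_zero, add_zero]
    -- (4) support shrinks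
    have c4 : ∀ i, supp (F i) (w' i) ⊆ supp (F i) (w i) := by
      intro i a ha
      obtain ⟨haF, haw⟩ := mem_supp.mp ha
      rcases eq_or_ne (ν i) 0 with h | h
      · rw [hzero i h a] at haw; exact mem_supp.mpr ⟨haF, haw⟩
      obtain ⟨hpsupp, hqsupp, hpq⟩ := hfacts i h
      by_cases hap : a = p i
      · rw [hap]; exact hpsupp
      by_cases haq : a = qf i
      · rw [haq]; exact hqsupp
      · have : D i a = 0 := by simp only [hD, if_neg hap, if_neg haq]; ring
        refine mem_supp.mpr ⟨haF, ?_⟩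
        intro hwa
        apply haw
        simp only [hw', this, mul_zero, add_zero]
        exact hwa
    -- (5) strict decrease at i₁
    have c5 : (supp (F i₁) (w' i₁)).card < (supp (F i₁) (w i₁)).card := by
      obtain ⟨hpsupp, hqsupp, hpq⟩ := hfacts i₁ hνi₁
      have hw'q : w' i₁ (qf i₁) = 0 := by
        have hD1 : D i₁ (qf i₁) = -1 := by
          simp only [hD, if_neg (Ne.symm hpq), if_pos rfl]; norm_num
        have htval : t = w i₁ (qf i₁) / ν i₁ := by rw [ht, hti₁]
        simp only [hw', hD1, htval]
        field_simp
        ring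
      have hsub : supp (F i₁) (w' i₁) ⊆ (supp (F i₁) (w i₁)).erase (qf i₁) := by
        intro a ha
        refine Finset.mem_erase.mpr ⟨?_, c4 i₁ ha⟩
        intro heq
        exact (mem_supp.mp ha).2 (heq ▸ hw'q)
      calc (supp (F i₁) (w' i₁)).card ≤ ((supp (F i₁) (w i₁)).erase (qf i₁)).card :=
            Finset.card_le_card hsub
        _ < (supp (F i₁) (w i₁)).card :=
            Finset.card_erase_lt_of_mem hqsupp
    -- total measure decreases
    have hmeas : ∑ i, (supp (F i) (w' i)).card < ∑ i, (supp (F i) (w i)).card :=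
      Finset.sum_lt_sum (fun i _ => Finset.card_le_card (c4 i))
        ⟨i₁, Finset.mem_univ _, c5⟩
    exact ih w' c1 c2 c3 (by omega)

lemma dist_bound {n : ℕ} [FiniteDimensional ℝ E] (A : Fin n → Set E)
    (hfin : ∀ i, (A i).Finite) (c : Fin n → E) {R : ℝ}
    (hrad : ∀ i, A i ⊆ closedBall (c i) R) (y : Fin n → E)
    (hy : ∀ i, y i ∈ convexHull ℝ (A i)) :
    ∃ a : Fin n → E, (∀ i, a i ∈ A i) ∧
      ‖∑ i, y i - ∑ i, a i‖ ^ 2 ≤ (Module.finrank ℝ E) * R ^ 2 := by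
  classical
  set F : Fin n → Finset E := fun i => (hfin i).toFinset with hF
  have hcoe : ∀ i, (F i : Set E) = A i := fun i => (hfin i).coe_toFinset
  have hy' : ∀ i, ∃ w : E → ℝ, (∀ a ∈ F i, 0 ≤ w a) ∧ ∑ a ∈ F i, w a = 1 ∧
      ∑ a ∈ F i, w a • a = y i := by
    intro i
    have := hy i
    rw [← hcoe i] at this
    exact Finset.mem_convexHull'.mp this
  choose w hw0 hw1 hwy using hy'
  obtain ⟨w', hw'0, hw'1, hw'z, hw'bad⟩ := sf_reduce F (∑ i, y i)
    (∑ i, (supp (F i) (w i)).card) w hw0 hw1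
    (by rw [Finset.sum_congr rfl fun i _ => hwy i]) le_rfl
  set x : Fin n → E := fun i => ∑ a ∈ F i, w' i a • a with hx
  have hxsum : ∑ i, x i = ∑ i, y i := hw'z
  set Bad := Finset.univ.filter (fun i => 2 ≤ (supp (F i) (w' i)).card) with hBad
  set σ : Fin n → ℝ := fun i => if 2 ≤ (supp (F i) (w' i)).card then R ^ 2 else 0 with hσ
  have hvar : ∀ i, ∑ a ∈ F i, w' i a * ‖x i - a‖ ^ 2 ≤ σ i := by
    intro i
    by_cases h : 2 ≤ (supp (F i) (w' i)).card
    · rw [hσ]; simp only [if_pos h]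
      refine variance_le (F i) (w' i) (hw'0 i) (hw'1 i) (x i) (c i) rfl ?_
      intro a haF
      have : a ∈ A i := by rw [← hcoe i]; exact haF
      have := hrad i this
      rwa [mem_closedBall, dist_eq_norm] at this
    · rw [hσ]; simp only [if_neg h]
      -- support is a single point and x i equals it
      have hsub : supp (F i) (w' i) ⊆ F i := supp_subset
      have hvanish : ∀ a ∈ F i, a ∉ supp (F i) (w' i) → w' i a = 0 := by
        intro a haF hanot
        by_contra hne
        exact hanot (mem_supp.mpr ⟨haF, hne⟩)
      have h1 : ∑ a ∈ supp (F i) (w' i), w' i a = 1 := by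
        rw [Finset.sum_subset hsub hvanish]; exact hw'1 i
      have hcard : (supp (F i) (w' i)).card = 1 := by
        rcases Nat.lt_or_ge (supp (F i) (w' i)).card 2 with hlt | hge
        · interval_cases hc : (supp (F i) (w' i)).card
          · rw [Finset.card_eq_zero.mp hc, Finset.sum_empty] at h1
            exact absurd h1.symm one_ne_zero
          · rfl
        · exact absurd hge h
      obtain ⟨a₀, ha₀⟩ := Finset.card_eq_one.mp hcard
      have hw1a₀ : w' i a₀ = 1 := by rw [ha₀, Finset.sum_singleton] at h1; exact h1
      have hxa₀ : x i = a₀ := by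
        simp only [hx]
        rw [← Finset.sum_subset hsub (fun a haF hanot => by rw [hvanish a haF hanot, zero_smul]),
          ha₀, Finset.sum_singleton, hw1a₀, one_smul]
      have : ∑ a ∈ F i, w' i a * ‖x i - a‖ ^ 2
          = ∑ a ∈ supp (F i) (w' i), w' i a * ‖x i - a‖ ^ 2 :=
        (Finset.sum_subset hsub (fun a haF hanot => by rw [hvanish a haF hanot, zero_mul])).symm
      rw [this, ha₀, Finset.sum_singleton, hxa₀, sub_self, norm_zero]
      norm_num
  obtain ⟨g, hgF, hgbound⟩ := choice_lemma F w' x σ hw'0 hw'1 (fun i => rfl) hvar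
    Finset.univ 0
  refine ⟨g, fun i => by rw [← hcoe i]; exact hgF i (Finset.mem_univ i), ?_⟩
  have hσsum : ∑ i, σ i ≤ (Module.finrank ℝ E) * R ^ 2 := by
    have : ∑ i, σ i = (Bad.card : ℝ) * R ^ 2 := by
      simp only [hσ]
      rw [← Finset.sum_filter, ← hBad, Finset.sum_const, nsmul_eq_mul]
    rw [this]
    exact mul_le_mul_of_nonneg_right (Nat.cast_le.mpr hw'bad) (sq_nonneg R)
  have hsplit : ∑ i, (x i - g i) = ∑ i, y i - ∑ i, g i := by
    rw [Finset.sum_sub_distrib, hxsum]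
  rw [zero_add, hsplit, norm_zero] at hgbound
  calc ‖∑ i, y i - ∑ i, g i‖ ^ 2 ≤ 0 ^ 2 + ∑ i, σ i := hgbound
    _ ≤ (Module.finrank ℝ E) * R ^ 2 := by rw [pow_two, mul_zero, zero_add]; exact hσsum

theorem one_step_absorption {d n : ℕ} (A : Fin n → Set (EuclideanSpace ℝ (Fin d)))
    (hne : ∀ i, (A i).Nonempty) (hfin : ∀ i, (A i).Finite)
    (b c : Fin n → EuclideanSpace ℝ (Fin d)) (q R Q : ℝ)
    (hq : 0 < q) (hR : 0 < R) (hQ : 0 < Q)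
    (hball : ∀ i, closedBall (b i) q ⊆ convexHull ℝ (A i))
    (hrad : ∀ i, A i ⊆ closedBall (c i) R)
    (habs : R * Real.sqrt d ≤ n * Q) :
    (∑ i, closedBall (b i) q) ⊆ ∑ i, ⋃ x ∈ A i, closedBall x Q := by
  rcases Nat.eq_zero_or_pos n with hn | hn
  · subst hn
    intro z hz
    simpa using hz
  intro z hz
  rw [Set.mem_fintype_sum] at hz
  obtain ⟨y, hy, hysum⟩ := hz
  have hyc : ∀ i, y i ∈ convexHull ℝ (A i) := fun i => hball i (hy i)
  obtain ⟨a, ha, hbound⟩ := dist_bound A hfin c hrad y hyc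
  rw [finrank_euclideanSpace_fin] at hbound
  -- norm bound
  have hnorm : ‖∑ i, y i - ∑ i, a i‖ ≤ n * Q := by
    have h1 : ‖∑ i, y i - ∑ i, a i‖ = Real.sqrt (‖∑ i, y i - ∑ i, a i‖ ^ 2) :=
      (Real.sqrt_sq (norm_nonneg _)).symm
    rw [h1]
    calc Real.sqrt (‖∑ i, y i - ∑ i, a i‖ ^ 2) ≤ Real.sqrt ((d : ℝ) * R ^ 2) :=
          Real.sqrt_le_sqrt hbound
      _ = Real.sqrt d * R := by
          rw [Real.sqrt_mul (Nat.cast_nonneg d), Real.sqrt_sq hR.le]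
      _ ≤ n * Q := by rw [mul_comm]; exact habs
  set e : EuclideanSpace ℝ (Fin d) := (n : ℝ)⁻¹ • (∑ i, y i - ∑ i, a i) with he
  have hne' : (n : ℝ) ≠ 0 := Nat.cast_ne_zero.mpr hn.ne'
  have henorm : ‖e‖ ≤ Q := by
    rw [he, norm_smul, norm_inv, Real.norm_natCast]
    rw [inv_mul_le_iff₀ (by positivity)]
    rwa [mul_comm] at hnorm ⊢
  rw [Set.mem_fintype_sum]
  refine ⟨fun i => a i + e, fun i => ?_, ?_⟩
  · refine Set.mem_biUnion (ha i) ?_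
    rw [mem_closedBall, dist_eq_norm]
    simpa using henorm
  · rw [Finset.sum_add_distrib, Finset.sum_const, Finset.card_univ, Fintype.card_fin,
      he, ← Nat.cast_smul_eq_nsmul ℝ, smul_smul, mul_inv_cancel₀ hne', one_smul]
    rw [← hysum]
    abel
end
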